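/- arXiv:math/0609119 — 3 statements merged into one kernel-verified Lean document; each statement's English description precedes it below -/
import Mathlib

section
/- Let n ≥ 2, let 𝔽 be a field and let S_2 ⊆ C([n],2). Then the simplicial matroid Sim_2^n(S_2) is superdense if and only if it is supersolvable. -/
/-!
Common definitions for simplicial matroids, following Cordovil–Lemos–Linhares Sales,
"Dirac's theorem on simplicial matroids".

We model `[n] = {1,…,n}` by `Fin n`, and a subset of `[n]` by a `Finset (Fin n)`.
A family `S_k ⊆ C([n],k)` is a `Finset (Finset (Fin n))` (all of whose members
have cardinality `k`, which is imposed by hypotheses in the theorems).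
-/

open Finset

/-- The incidence number `[F' : F]`: if `F = i₁ < i₂ < ⋯ < iₘ` and `F' = F \ {iⱼ}`
then `[F' : F] = (-1)ʲ` (with `j` the 1-based position of the deleted element),
and `[F' : F] = 0` otherwise. -/
def inc {n : ℕ} (F' F : Finset (Fin n)) : ℤ :=
  ∑ i ∈ F, if F' = F.erase i then (-1 : ℤ) ^ (F.filter (fun j => j ≤ i)).card else 0

/-- The family `C([n], m)` of `m`-element subsets of `[n]`, as a type. -/
abbrev Csets (n m : ℕ) := {F : Finset (Fin n) // F.card = m}

/-- `∂_k F`, the boundary of a single `k`-subset `F` of `[n]`,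
as a vector of `𝔽^{C([n],k-1)}`. -/
def bvec (𝔽 : Type*) [Field 𝔽] (n k : ℕ) (F : Finset (Fin n)) : Csets n (k - 1) → 𝔽 :=
  fun F' => ((inc F'.1 F : ℤ) : 𝔽)

/-- Independence in the simplicial matroid `Sim_k^n(S_k)` over `𝔽`:
`X ⊆ S_k` is independent iff the vectors `∂_k F`, `F ∈ X`, are linearly independent. -/
def SimIndep (𝔽 : Type*) [Field 𝔽] (n k : ℕ) (Sk X : Finset (Finset (Fin n))) : Prop :=
  X ⊆ Sk ∧ LinearIndependent 𝔽 (fun F : X => bvec 𝔽 n k F.1)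

/-- A circuit of `Sim_k^n(S_k)`: a minimal dependent subset of the ground set. -/
def SimCircuit (𝔽 : Type*) [Field 𝔽] (n k : ℕ) (Sk C : Finset (Finset (Fin n))) : Prop :=
  C ⊆ Sk ∧ ¬ LinearIndependent 𝔽 (fun F : C => bvec 𝔽 n k F.1) ∧
    ∀ C' ⊂ C, LinearIndependent 𝔽 (fun F : C' => bvec 𝔽 n k F.1)

/-- The rank (in `Sim_k^n`) of a set `X` of `k`-subsets of `[n]`:
the dimension of the span of the boundaries of its members. -/
noncomputable def simRank (𝔽 : Type*) [Field 𝔽] (n k : ℕ) (X : Finset (Finset (Fin n))) : ℕ :=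
  Module.finrank 𝔽 (Submodule.span 𝔽 ((fun F => bvec 𝔽 n k F) '' (X : Set (Finset (Fin n)))))

/-- A cocircuit of `Sim_k^n(S_k)`, i.e. a circuit of the dual matroid:
a minimal set `C ⊆ S_k` whose complement does not span (`X` is independent in the dual
matroid iff `r(E ∖ X) = r(E)`). -/
def SimCocircuit (𝔽 : Type*) [Field 𝔽] (n k : ℕ) (Sk C : Finset (Finset (Fin n))) : Prop :=
  C ⊆ Sk ∧ simRank 𝔽 n k (Sk \ C) < simRank 𝔽 n k Sk ∧
    ∀ C' ⊂ C, simRank 𝔽 n k (Sk \ C') = simRank 𝔽 n k Sk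

/-- The boundary map `∂_k : 𝔽^{S_k} → 𝔽^{C([n],k-1)}`. -/
noncomputable def bdryMap (𝔽 : Type*) [Field 𝔽] (n k : ℕ) (Sk : Finset (Finset (Fin n))) :
    (↥Sk → 𝔽) →ₗ[𝔽] (Csets n (k - 1) → 𝔽) :=
  Matrix.mulVecLin (Matrix.of fun (F' : Csets n (k - 1)) (F : ↥Sk) => ((inc F'.1 F.1 : ℤ) : 𝔽))

/-- The coboundary `δ^{k-1} V` of a `(k-1)`-subset `V` of `[n]`,
as a vector of `𝔽^{S_k}`; its `F`-coordinate is `[V : F]`. -/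
def cobdry (𝔽 : Type*) [Field 𝔽] {n : ℕ} (Sk : Finset (Finset (Fin n)))
    (V : Finset (Fin n)) : ↥Sk → 𝔽 :=
  fun F => ((inc V F.1 : ℤ) : 𝔽)

/-- The boundary `∂_{k+1} X` of a `(k+1)`-subset `X` of `[n]`, regarded as a vector
of `𝔽^{S_k}`; its `F`-coordinate is `[F : X]`. -/
def pbdry (𝔽 : Type*) [Field 𝔽] {n : ℕ} (Sk : Finset (Finset (Fin n)))
    (X : Finset (Fin n)) : ↥Sk → 𝔽 :=
  fun F => ((inc F.1 X : ℤ) : 𝔽)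

open scoped Classical in
/-- The support of a vector of `𝔽^{S_k}`, as a set of `k`-subsets of `[n]`. -/
noncomputable def suppFin {𝔽 : Type*} [Field 𝔽] {n : ℕ} {Sk : Finset (Finset (Fin n))}
    (v : ↥Sk → 𝔽) : Finset (Finset (Fin n)) :=
  (Sk.attach.filter fun F => v F ≠ 0).image Subtype.val

/-- `supp(δ^{k-1} V) ⊆ S_k`. -/
noncomputable def suppδ (𝔽 : Type*) [Field 𝔽] {n : ℕ} (Sk : Finset (Finset (Fin n)))
    (V : Finset (Fin n)) : Finset (Finset (Fin n)) :=
  suppFin (cobdry 𝔽 Sk V)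

/-- The cocircuit space of `Sim_k^n(S_k)`: the orthogonal complement, with respect to the
standard bilinear form on `𝔽^{S_k}`, of the circuit space `ker ∂_k`. -/
noncomputable def cocircSpace (𝔽 : Type*) [Field 𝔽] (n k : ℕ) (Sk : Finset (Finset (Fin n))) :
    Submodule 𝔽 (↥Sk → 𝔽) where
  carrier := {w | ∀ v ∈ LinearMap.ker (bdryMap 𝔽 n k Sk), ∑ F, v F * w F = 0}
  zero_mem' := by intro v hv; simp
  add_mem' := by
    intro a b ha hb v hv
    have h1 := ha v hv
    have h2 := hb v hv
    simp only [Pi.add_apply, mul_add, Finset.sum_add_distrib]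
    rw [h1, h2, add_zero]
  smul_mem' := by
    intro c w hw v hv
    have h := hw v hv
    simp only [Pi.smul_apply, smul_eq_mul]
    calc ∑ F, v F * (c * w F) = ∑ F, c * (v F * w F) := by
          exact Finset.sum_congr rfl fun F _ => by ring
      _ = c * ∑ F, v F * w F := (Finset.mul_sum _ _ _).symm
      _ = 0 := by rw [h, mul_zero]

/-- The faces of the `k`-hyperclique complex `⟨S_k⟩`: all `F ⊆ [n]` with `|F| < k`,
together with all `F` every `k`-element subset of which lies in `S_k`. -/
def IsFace {n : ℕ} (k : ℕ) (Sk : Finset (Finset (Fin n))) (F : Finset (Fin n)) : Prop :=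
  F.card < k ∨ ∀ G ⊆ F, G.card = k → G ∈ Sk

/-- A facet of `⟨S_k⟩`: an inclusion-maximal face. -/
def IsFacet {n : ℕ} (k : ℕ) (Sk : Finset (Finset (Fin n))) (F : Finset (Fin n)) : Prop :=
  IsFace k Sk F ∧ ∀ G, IsFace k Sk G → F ⊆ G → F = G

/-- `V` is simplicial in `⟨S_k⟩` if there is exactly one facet `X` of `⟨S_k⟩`
with `V ⊊ X`. -/
def SimplicialFace {n : ℕ} (k : ℕ) (Sk : Finset (Finset (Fin n))) (V : Finset (Fin n)) : Prop :=
  ∃! X, IsFacet k Sk X ∧ V ⊂ X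

/-- The `k`-skeleta of the complexes `Δ_0 = ⟨S_k⟩`, `Δ_{j+1} = Δ_j ∖∖ V_j`, where
`Δ ∖∖ V = ⟨(skeleton of Δ) ∖ supp(δ^{k-1} V)⟩` (0-indexed). -/
noncomputable def delSeq (𝔽 : Type*) [Field 𝔽] {n : ℕ} (Sk : Finset (Finset (Fin n)))
    (V : ℕ → Finset (Fin n)) : ℕ → Finset (Finset (Fin n))
  | 0 => Sk
  | j + 1 => delSeq 𝔽 Sk V j \ suppδ 𝔽 (delSeq 𝔽 Sk V j) (V j)

/-- `C*_j := supp(δ^{k-1} V_j) ∖ ⋃_{i<j} supp(δ^{k-1} V_i)` (0-indexed). -/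
noncomputable def Cstar (𝔽 : Type*) [Field 𝔽] {n : ℕ} (Sk : Finset (Finset (Fin n)))
    (V : ℕ → Finset (Fin n)) (j : ℕ) : Finset (Finset (Fin n)) :=
  suppδ 𝔽 Sk (V j) \ (Finset.range j).biUnion (fun i => suppδ 𝔽 Sk (V i))

/-- `(V_1,…,V_r)` (0-indexed: `V 0, …, V (r-1)`) is a basic linear sequence for `⟨S_k⟩`,
where `r` is the rank of `Sim_k^n(S_k)`: each `V_j` is a `(k-1)`-subset of `[n]` and each
`C*_j` is a cocircuit of `Sim_k^n(S_k(Δ_{j-1}))`. -/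
def BasicLinearSeq (𝔽 : Type*) [Field 𝔽] (n k : ℕ) (Sk : Finset (Finset (Fin n))) (r : ℕ)
    (V : ℕ → Finset (Fin n)) : Prop :=
  simRank 𝔽 n k Sk = r ∧ (∀ j < r, (V j).card = k - 1) ∧
    ∀ j < r, SimCocircuit 𝔽 n k (delSeq 𝔽 Sk V j) (Cstar 𝔽 Sk V j)

/-- `⟨S_k⟩` is D-perfect: there is a basic linear sequence `V_1,…,V_r` such that each `V_j`
is simplicial in `Δ_{j-1}`. -/
def DPerfect (𝔽 : Type*) [Field 𝔽] (n k : ℕ) (Sk : Finset (Finset (Fin n))) : Prop :=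
  ∃ V : ℕ → Finset (Fin n),
    BasicLinearSeq 𝔽 n k Sk (simRank 𝔽 n k Sk) V ∧
      ∀ j < simRank 𝔽 n k Sk, SimplicialFace k (delSeq 𝔽 Sk V j) (V j)

/-- A flat of `Sim_k^n(S_k)`: a closed subset of the ground set. -/
def SimFlat (𝔽 : Type*) [Field 𝔽] (n k : ℕ) (Sk X : Finset (Finset (Fin n))) : Prop :=
  X ⊆ Sk ∧ ∀ F ∈ Sk,
    bvec 𝔽 n k F ∈ Submodule.span 𝔽 ((fun G => bvec 𝔽 n k G) '' (X : Set (Finset (Fin n)))) →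
      F ∈ X

/-- A hyperplane of `Sim_k^n(S_k)`: a flat of rank one less than the rank of the matroid. -/
def SimHyperplane (𝔽 : Type*) [Field 𝔽] (n k : ℕ) (Sk H : Finset (Finset (Fin n))) : Prop :=
  SimFlat 𝔽 n k Sk H ∧ simRank 𝔽 n k H + 1 = simRank 𝔽 n k Sk

/-- A modular flat of `Sim_k^n(S_k)`:
`r(X) + r(Y) = r(X ∪ Y) + r(X ∩ Y)` for every flat `Y`. -/
def ModularFlat (𝔽 : Type*) [Field 𝔽] (n k : ℕ) (Sk X : Finset (Finset (Fin n))) : Prop :=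
  SimFlat 𝔽 n k Sk X ∧ ∀ Y, SimFlat 𝔽 n k Sk Y →
    simRank 𝔽 n k X + simRank 𝔽 n k Y = simRank 𝔽 n k (X ∪ Y) + simRank 𝔽 n k (X ∩ Y)

open scoped Classical in
/-- The closure of `X` in `Sim_k^n(S_k)`. -/
noncomputable def simClosure (𝔽 : Type*) [Field 𝔽] (n k : ℕ)
    (Sk X : Finset (Finset (Fin n))) : Finset (Finset (Fin n)) :=
  Sk.filter fun F =>
    bvec 𝔽 n k F ∈ Submodule.span 𝔽 ((fun G => bvec 𝔽 n k G) '' (X : Set (Finset (Fin n))))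

/-- `Sim_k^n(S_k)` is supersolvable: it admits a maximal chain of modular flats
`cl(∅) = X_0 ⊊ X_1 ⊊ ⋯ ⊊ X_r = S_k`, `r` the rank. -/
def Supersolvable (𝔽 : Type*) [Field 𝔽] (n k : ℕ) (Sk : Finset (Finset (Fin n))) : Prop :=
  ∃ X : ℕ → Finset (Finset (Fin n)),
    X 0 = simClosure 𝔽 n k Sk ∅ ∧ X (simRank 𝔽 n k Sk) = Sk ∧
      (∀ i < simRank 𝔽 n k Sk, X i ⊂ X (i + 1)) ∧
      ∀ i ≤ simRank 𝔽 n k Sk, ModularFlat 𝔽 n k Sk (X i)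

/-- `H` is a dense hyperplane of `Sim_k^n(ground)`: a hyperplane of the form
`ground ∖ supp(δ^{k-1} V)` for some `(k-1)`-subset `V` simplicial in `⟨ground⟩`. -/
def DenseHyp (𝔽 : Type*) [Field 𝔽] (n k : ℕ) (ground H : Finset (Finset (Fin n))) : Prop :=
  SimHyperplane 𝔽 n k ground H ∧
    ∃ V : Finset (Fin n), V.card = k - 1 ∧ SimplicialFace k ground V ∧
      H = ground \ suppδ 𝔽 ground V

/-- `Sim_k^n(S_k)` is superdense: there is a chain `∅ = X_0 ⊊ X_1 ⊊ ⋯ ⊊ X_r = S_k` of flats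
(`r` the rank) with each `X_i` a dense hyperplane of `Sim_k^n(X_{i+1})`. -/
def Superdense (𝔽 : Type*) [Field 𝔽] (n k : ℕ) (Sk : Finset (Finset (Fin n))) : Prop :=
  ∃ X : ℕ → Finset (Finset (Fin n)),
    X 0 = ∅ ∧ X (simRank 𝔽 n k Sk) = Sk ∧
      (∀ i ≤ simRank 𝔽 n k Sk, SimFlat 𝔽 n k Sk (X i)) ∧
      (∀ i < simRank 𝔽 n k Sk, X i ⊂ X (i + 1)) ∧
      ∀ i < simRank 𝔽 n k Sk, DenseHyp 𝔽 n k (X (i + 1)) (X i)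

/-- `Sim_k^n(S_k)` is triangulable over `𝔽`: the boundaries of the `(k+1)`-faces of `⟨S_k⟩`
span the circuit space `ker ∂_k`. -/
def Triangulable (𝔽 : Type*) [Field 𝔽] (n k : ℕ) (Sk : Finset (Finset (Fin n))) : Prop :=
  Submodule.span 𝔽
      {v : ↥Sk → 𝔽 | ∃ X : Finset (Fin n), X.card = k + 1 ∧ IsFace k Sk X ∧ v = pbdry 𝔽 Sk X}
    = LinearMap.ker (bdryMap 𝔽 n k Sk)

/-- `Sim_k^n(S_k)` is strongly triangulable over `𝔽`: there are `(k+1)`-faces `X_1,…,X_{m'}`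
of `⟨S_k⟩` whose boundaries span `ker ∂_k` and such that every circuit `C` has a
representing vector `C⃗` with support `C` which is a combination, with nonzero coefficients,
of boundaries `∂_{k+1} X_{i_j}` with `⋃_{F ∈ C} F = ⋃_j X_{i_j}`. -/
def StronglyTriangulable (𝔽 : Type*) [Field 𝔽] (n k : ℕ)
    (Sk : Finset (Finset (Fin n))) : Prop :=
  ∃ (m' : ℕ) (Xs : Fin m' → Finset (Fin n)),
    (∀ i, (Xs i).card = k + 1 ∧ IsFace k Sk (Xs i)) ∧
    Submodule.span 𝔽 (Set.range fun i => pbdry 𝔽 Sk (Xs i)) = LinearMap.ker (bdryMap 𝔽 n k Sk) ∧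
    ∀ C, SimCircuit 𝔽 n k Sk C →
      ∃ (s : ℕ) (idx : Fin s → Fin m') (a : Fin s → 𝔽) (Cv : ↥Sk → 𝔽),
        (∀ j, a j ≠ 0) ∧ suppFin Cv = C ∧
        Cv = ∑ j, a j • pbdry 𝔽 Sk (Xs (idx j)) ∧
        C.biUnion id = Finset.univ.biUnion fun j : Fin s => Xs (idx j)

/-- The simple graph `([n], S_2)`. -/
def graphOf {n : ℕ} (S2 : Finset (Finset (Fin n))) : SimpleGraph (Fin n) where
  Adj u v := u ≠ v ∧ ({u, v} : Finset (Fin n)) ∈ S2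
  symm := by
    constructor
    intro u v h
    exact ⟨h.1.symm, by rw [Finset.pair_comm]; exact h.2⟩
  loopless := by constructor; intro u h; exact h.1 rfl

/-- A simple graph is chordal if every cycle of length at least four has a chord, i.e. an
edge of the graph joining two non-consecutive vertices of the cycle. -/
def Chordal {α : Type*} (G : SimpleGraph α) : Prop :=
  ∀ (v : α) (w : G.Walk v v), w.IsCycle → 4 ≤ w.length →
    ∃ u₁ u₂, u₁ ∈ w.support ∧ u₂ ∈ w.support ∧ G.Adj u₁ u₂ ∧ s(u₁, u₂) ∉ w.edges

/-!
Write `G` for the graph `([n], S₂)`. The boundary of an edge `{a, b}` is `±(e_a - e_b)`, so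
`Sim₂ⁿ(S₂)` is the graphic matroid of `G`. The set `{v}` is simplicial in `⟨S₂⟩` exactly when `v`
is a non-isolated vertex whose neighbourhood is a clique, and the dense hyperplane it defines is
`S₂` minus the star of `v`.

Superdense ⇒ supersolvable: deleting the star of such a vertex from `Y` leaves a set `X` with
`span X ⊓ span Z = span (X ∩ Z)` for every flat `Z` of `Y`, because vectors of `span X` have zero
`v`-coordinate. For flats this property is modularity, and it is transitive along the chain.

Supersolvable ⇒ superdense: the graph is chordal (Stanley). Suppose a chordless cycle of length at
least four lies in the flat `X_{i+1}` of the modular chain but not in `X_i`. Each of its edges is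
spanned by the others, so at least two of them avoid `X_i`. The line through those two meets the
modular flat `X_i` in a third edge, which closes a triangle and so is a chord. By Dirac's theorem a
chordal graph with an edge has a simplicial vertex. Deleting its star keeps the graph chordal and
leaves a dense hyperplane, so induction on the number of edges builds the superdense chain.
-/

open Finset Module SimpleGraph

lemma mem_of_mem_sup_span_singleton {𝔽 M : Type*} [Field 𝔽] [AddCommGroup M] [Module 𝔽 M]
    {φ : M →ₗ[𝔽] 𝔽} {U : Submodule 𝔽 M} {b w : M} (hU : U ≤ LinearMap.ker φ) (hb : φ b ≠ 0)
    (hw : w ∈ U ⊔ Submodule.span 𝔽 {b}) (hφw : φ w = 0) : w ∈ U := by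
  obtain ⟨z, hz, y, hy, rfl⟩ := Submodule.mem_sup.mp hw
  obtain ⟨c, rfl⟩ := Submodule.mem_span_singleton.mp hy
  rw [map_add, map_smul, hU hz, zero_add, smul_eq_mul, mul_eq_zero] at hφw
  rw [hφw.resolve_right hb, zero_smul, add_zero]
  exact hz

lemma eq_self_of_strictMono_of_apply_le {f : ℕ → ℕ} {r : ℕ} (hf : ∀ i < r, f i < f (i + 1))
    (hr : f r ≤ r) {i : ℕ} (hi : i ≤ r) : f i = i := by
  have hup (j : ℕ) (hj : j ≤ r) : j ≤ f j := by
    induction j with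
    | zero => exact Nat.zero_le _
    | succ j ih => have := hf j hj; have := ih (by omega); omega
  have hdown : f i + (r - i) ≤ f r := by
    induction hi using Nat.decreasingInduction with
    | self => simp
    | of_succ j hj ih => have := hf j hj; omega
  have := hup i hi
  omega

lemma Finset.exists_mem_notMem_of_ne {α : Type*} {s t : Finset α} (hst : s ≠ t)
    (h : t.card ≤ s.card) : ∃ x ∈ s, x ∉ t :=
  not_subset.mp fun hsub => hst (eq_of_subset_of_card_le hsub h)

lemma Finset.eq_pair_of_mem {α : Type*} [DecidableEq α] {s : Finset α} (hs : s.card = 2)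
    {x y : α} (hx : x ∈ s) (hy : y ∈ s) (hxy : x ≠ y) : s = {x, y} :=
  (eq_of_subset_of_card_le (by simp [insert_subset_iff, hx, hy]) (by rw [hs, card_pair hxy])).symm

lemma Sym2.toFinset_injective {α : Type*} [DecidableEq α] :
    Function.Injective (Sym2.toFinset : Sym2 α → Finset α) := fun _ _ h =>
  Sym2.ext fun x => by rw [← Sym2.mem_toFinset, h, Sym2.mem_toFinset]

section SimplicialMatroid

variable {𝔽 : Type*} [Field 𝔽] {n k : ℕ} {S X Y : Finset (Finset (Fin n))}

noncomputable def simSpan (𝔽 : Type*) [Field 𝔽] (n k : ℕ) (X : Finset (Finset (Fin n))) :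
    Submodule 𝔽 (Csets n (k - 1) → 𝔽) :=
  Submodule.span 𝔽 ((fun F => bvec 𝔽 n k F) '' (X : Set (Finset (Fin n))))

lemma simRank_eq_finrank_simSpan (X : Finset (Finset (Fin n))) :
    simRank 𝔽 n k X = finrank 𝔽 (simSpan 𝔽 n k X) := rfl

lemma bvec_mem_simSpan {F : Finset (Fin n)} (hF : F ∈ X) : bvec 𝔽 n k F ∈ simSpan 𝔽 n k X :=
  Submodule.subset_span ⟨F, hF, rfl⟩

lemma simSpan_le_iff {U : Submodule 𝔽 (Csets n (k - 1) → 𝔽)} :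
    simSpan 𝔽 n k X ≤ U ↔ ∀ F ∈ X, bvec 𝔽 n k F ∈ U := by
  simp [simSpan, Submodule.span_le, Set.subset_def]

lemma simSpan_mono (h : X ⊆ Y) : simSpan 𝔽 n k X ≤ simSpan 𝔽 n k Y :=
  Submodule.span_mono (Set.image_mono (coe_subset.mpr h))

lemma simSpan_union : simSpan 𝔽 n k (X ∪ Y) = simSpan 𝔽 n k X ⊔ simSpan 𝔽 n k Y := by
  rw [simSpan, coe_union, Set.image_union, Submodule.span_union]; rfl

lemma simSpan_inter_le : simSpan 𝔽 n k (X ∩ Y) ≤ simSpan 𝔽 n k X ⊓ simSpan 𝔽 n k Y :=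
  le_inf (simSpan_mono inter_subset_left) (simSpan_mono inter_subset_right)

lemma simRank_mono (h : X ⊆ Y) : simRank 𝔽 n k X ≤ simRank 𝔽 n k Y :=
  Submodule.finrank_mono (simSpan_mono h)

@[simp] lemma simRank_empty : simRank 𝔽 n k (∅ : Finset (Finset (Fin n))) = 0 := by
  rw [simRank_eq_finrank_simSpan, simSpan, coe_empty, Set.image_empty, Submodule.span_empty,
    finrank_bot]

lemma simFlat_self (S : Finset (Finset (Fin n))) : SimFlat 𝔽 n k S S :=
  ⟨Subset.rfl, fun _ hF _ => hF⟩

lemma SimFlat.trans (hY : SimFlat 𝔽 n k S Y) (hX : SimFlat 𝔽 n k Y X) : SimFlat 𝔽 n k S X :=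
  ⟨hX.1.trans hY.1, fun F hF hFX => hX.2 F (hY.2 F hF (simSpan_mono hX.1 hFX)) hFX⟩

lemma SimFlat.of_subset (hX : SimFlat 𝔽 n k S X) (hXY : X ⊆ Y) (hYS : Y ⊆ S) :
    SimFlat 𝔽 n k Y X :=
  ⟨hXY, fun F hF => hX.2 F (hYS hF)⟩

lemma SimFlat.inter_left (hY : SimFlat 𝔽 n k S Y) (hX : X ⊆ S) : SimFlat 𝔽 n k X (X ∩ Y) :=
  ⟨inter_subset_left, fun F hF hFXY =>
    mem_inter.mpr ⟨hF, hY.2 F (hX hF) (simSpan_mono inter_subset_right hFXY)⟩⟩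

lemma SimFlat.simRank_lt (hX : SimFlat 𝔽 n k Y X) (hXY : X ⊂ Y) :
    simRank 𝔽 n k X < simRank 𝔽 n k Y := by
  obtain ⟨F, hFY, hFX⟩ := exists_of_ssubset hXY
  refine Submodule.finrank_lt_finrank_of_lt
    (lt_of_le_of_ne (simSpan_mono hXY.subset) fun h => ?_)
  exact hFX (hX.2 F hFY (h ▸ bvec_mem_simSpan hFY))

lemma mem_simClosure_iff {F : Finset (Fin n)} :
    F ∈ simClosure 𝔽 n k S X ↔ F ∈ S ∧ bvec 𝔽 n k F ∈ simSpan 𝔽 n k X := by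
  simp [simClosure, simSpan]

lemma simSpan_simClosure (hX : X ⊆ S) :
    simSpan 𝔽 n k (simClosure 𝔽 n k S X) = simSpan 𝔽 n k X :=
  le_antisymm (simSpan_le_iff.mpr fun _ hF => (mem_simClosure_iff.mp hF).2)
    (simSpan_mono fun _ hF => mem_simClosure_iff.mpr ⟨hX hF, bvec_mem_simSpan hF⟩)

lemma simFlat_simClosure (hX : X ⊆ S) : SimFlat 𝔽 n k S (simClosure 𝔽 n k S X) :=
  ⟨fun _ hF => (mem_simClosure_iff.mp hF).1, fun _ hF hsp =>
    mem_simClosure_iff.mpr ⟨hF, (simSpan_simClosure (𝔽 := 𝔽) (k := k) hX) ▸ hsp⟩⟩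

lemma SimFlat.simClosure_pair_subset {F G : Finset (Fin n)} (hY : SimFlat 𝔽 n k S Y)
    (hF : F ∈ Y) (hG : G ∈ Y) : simClosure 𝔽 n k S {F, G} ⊆ Y := fun H hH => by
  obtain ⟨hHS, hsp⟩ := mem_simClosure_iff.mp hH
  exact hY.2 H hHS (simSpan_mono (by simp [insert_subset_iff, hF, hG]) hsp)

/-- For a flat `X` this is `ModularFlat`: the rank identity of `X` and `Y` is the dimension formula
for `span X ⊔ span Y` exactly when `span (X ∩ Y) = span X ⊓ span Y`. -/
def SpanModular (𝔽 : Type*) [Field 𝔽] (n k : ℕ) (S X : Finset (Finset (Fin n))) : Prop :=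
  ∀ Y, SimFlat 𝔽 n k S Y → simSpan 𝔽 n k X ⊓ simSpan 𝔽 n k Y ≤ simSpan 𝔽 n k (X ∩ Y)

lemma spanModular_self (S : Finset (Finset (Fin n))) : SpanModular 𝔽 n k S S := fun Y hY => by
  rw [inter_eq_right.mpr hY.1]; exact inf_le_right

lemma SpanModular.trans (hXY : X ⊆ Y) (hYS : Y ⊆ S) (hY : SpanModular 𝔽 n k S Y)
    (hX : SpanModular 𝔽 n k Y X) : SpanModular 𝔽 n k S X := by
  intro Z hZ w ⟨hwX, hwZ⟩
  have hwYZ : w ∈ simSpan 𝔽 n k (Y ∩ Z) := hY Z hZ ⟨simSpan_mono hXY hwX, hwZ⟩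
  have := hX (Y ∩ Z) (hZ.inter_left hYS) ⟨hwX, hwYZ⟩
  rwa [← inter_assoc, inter_eq_left.mpr hXY] at this

lemma SpanModular.modularFlat (hX : SimFlat 𝔽 n k S X) (h : SpanModular 𝔽 n k S X) :
    ModularFlat 𝔽 n k S X := by
  refine ⟨hX, fun Y hY => ?_⟩
  simp only [simRank_eq_finrank_simSpan]
  rw [simSpan_union, ← le_antisymm (h Y hY) simSpan_inter_le,
    Submodule.finrank_sup_add_finrank_inf_eq]

lemma ModularFlat.exists_mem_simSpan_pair (hX : ModularFlat 𝔽 n k S X)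
    (hY : SimFlat 𝔽 n k S Y) (hXY : X ⊆ Y) (hr : simRank 𝔽 n k Y = simRank 𝔽 n k X + 1)
    {e f : Finset (Fin n)} (he : e ∈ Y) (hf : f ∈ Y) (hef : simRank 𝔽 n k {e, f} = 2) :
    ∃ g ∈ X, bvec 𝔽 n k g ∈ simSpan 𝔽 n k {e, f} := by
  have hefS : {e, f} ⊆ S := by simp [insert_subset_iff, hY.1 he, hY.1 hf]
  set L := simClosure 𝔽 n k S {e, f}
  have hL : simRank 𝔽 n k L = 2 := by
    rw [simRank_eq_finrank_simSpan, simSpan_simClosure hefS]; exact hef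
  have hmod := hX.2 L (simFlat_simClosure hefS)
  have hXL : simRank 𝔽 n k (X ∪ L) ≤ simRank 𝔽 n k Y :=
    simRank_mono (union_subset hXY (hY.simClosure_pair_subset he hf))
  obtain ⟨g, hg⟩ : (X ∩ L).Nonempty := by
    rw [nonempty_iff_ne_empty]; rintro h; rw [h, simRank_empty] at hmod; omega
  exact ⟨g, (mem_inter.mp hg).1, (mem_simClosure_iff.mp (mem_inter.mp hg).2).2⟩

lemma mem_suppFin {v : ↥S → 𝔽} {F : Finset (Fin n)} :
    F ∈ suppFin v ↔ ∃ h : F ∈ S, v ⟨F, h⟩ ≠ 0 := by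
  classical
  unfold suppFin
  simp only [mem_image, Subtype.exists, exists_and_right, exists_eq_right]
  exact exists_congr fun _ => mem_filter.trans (and_iff_right (mem_attach _ _))

lemma exists_isFacet_superset {F : Finset (Fin n)} (hF : IsFace k S F) :
    ∃ M, IsFacet k S M ∧ F ⊆ M := by
  classical
  obtain ⟨M, hM, hmax⟩ := (univ.filter fun G => IsFace k S G ∧ F ⊆ G).exists_max_image card
    ⟨F, by simp [hF]⟩
  simp only [mem_filter, mem_univ, true_and] at hM hmax
  exact ⟨M, ⟨hM.1, fun G hG hMG => eq_of_subset_of_card_le hMG (hmax G ⟨hG, hM.2.trans hMG⟩)⟩,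
    hM.2⟩

lemma superdense_empty : Superdense 𝔽 n k ∅ :=
  ⟨fun _ => ∅, rfl, rfl, fun _ _ => simFlat_self _, fun i hi => by simp at hi,
    fun i hi => by simp at hi⟩

lemma Superdense.of_denseHyp (hH : DenseHyp 𝔽 n k S X) (h : Superdense 𝔽 n k X) :
    Superdense 𝔽 n k S := by
  obtain ⟨Y, hY0, hYr, hflat, hchain, hdense⟩ := h
  have hXS := hH.1.1
  have hXS' : X ⊂ S := ssubset_of_subset_of_ne hXS.1 (by rintro rfl; have := hH.1.2; omega)
  unfold Superdense
  rw [← hH.1.2]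
  generalize simRank 𝔽 n k X = r at hYr hflat hchain hdense ⊢
  refine ⟨fun i => if i = r + 1 then S else Y i, by simp [hY0], by simp, fun i hi => ?_,
    fun i hi => ?_, fun i hi => ?_⟩
  · dsimp only
    split_ifs
    exacts [simFlat_self S, hXS.trans (hflat i (by omega))]
  · rcases (Nat.lt_succ_iff.mp hi).eq_or_lt with rfl | hi
    · simpa [hYr] using hXS'
    · simpa [hi.ne, (Nat.succ_lt_succ hi).ne, (hi.trans (Nat.lt_succ_self r)).ne] using hchain i hi
  · rcases (Nat.lt_succ_iff.mp hi).eq_or_lt with rfl | hi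
    · simpa [hYr] using hH
    · simpa [hi.ne, (Nat.succ_lt_succ hi).ne, (hi.trans (Nat.lt_succ_self r)).ne] using hdense i hi

end SimplicialMatroid

section Graphic

variable {𝔽 : Type*} [Field 𝔽] {n : ℕ} {S X Y Z : Finset (Finset (Fin n))}

def edgeVec (𝔽 : Type*) [Field 𝔽] {n : ℕ} (a b : Fin n) : Csets n (2 - 1) → 𝔽 :=
  fun V => (if V.1 = {a} then 1 else 0) - (if V.1 = {b} then 1 else 0)

lemma edgeVec_add_edgeVec (a b c : Fin n) :
    edgeVec 𝔽 a b + edgeVec 𝔽 b c = edgeVec 𝔽 a c := by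
  funext V; simp only [edgeVec, Pi.add_apply]; ring

@[simp] lemma edgeVec_self (a : Fin n) : edgeVec 𝔽 a a = 0 := by
  funext V; simp [edgeVec]

lemma edgeVec_swap (a b : Fin n) : edgeVec 𝔽 b a = -edgeVec 𝔽 a b := by
  funext V; simp only [edgeVec, Pi.neg_apply]; ring

lemma inc_pair_of_lt {a b : Fin n} (hab : a < b) (V : Finset (Fin n)) :
    inc V {a, b} = (if V = {a} then 1 else 0) - (if V = {b} then 1 else 0) := by
  have hne := hab.ne
  have hfa : ({a, b} : Finset (Fin n)).filter (· ≤ a) = {a} := by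
    ext x; simp only [mem_filter, mem_insert, mem_singleton]
    constructor
    · rintro ⟨rfl | rfl, h⟩ <;> [rfl; exact absurd h hab.not_ge]
    · rintro rfl; simp
  have hfb : ({a, b} : Finset (Fin n)).filter (· ≤ b) = {a, b} :=
    filter_true_of_mem (by simp [hab.le])
  rw [inc, sum_pair hne, erase_insert (by simpa using hne), pair_comm,
    erase_insert (by simpa using hne.symm), pair_comm, hfa, hfb, card_singleton, card_pair hne]
  by_cases hva : V = {a} <;> by_cases hvb : V = {b} <;> simp_all

lemma bvec_pair_of_lt {a b : Fin n} (hab : a < b) : bvec 𝔽 n 2 {a, b} = edgeVec 𝔽 a b := by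
  funext V
  simp only [bvec, edgeVec, inc_pair_of_lt hab]
  split_ifs <;> simp

lemma bvec_pair_mem_iff {a b : Fin n} (hab : a ≠ b) {U : Submodule 𝔽 (Csets n (2 - 1) → 𝔽)} :
    bvec 𝔽 n 2 {a, b} ∈ U ↔ edgeVec 𝔽 a b ∈ U := by
  rcases hab.lt_or_gt with h | h
  · rw [bvec_pair_of_lt h]
  · rw [pair_comm, bvec_pair_of_lt h, edgeVec_swap, U.neg_mem_iff]

def vertexCoord (𝔽 : Type*) [Field 𝔽] {n : ℕ} (u : Fin n) : (Csets n (2 - 1) → 𝔽) →ₗ[𝔽] 𝔽 :=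
  LinearMap.proj (⟨{u}, card_singleton u⟩ : Csets n (2 - 1))

lemma inc_singleton_ne_zero_iff {u : Fin n} {F : Finset (Fin n)} (hF : F.card = 2) :
    ((inc {u} F : ℤ) : 𝔽) ≠ 0 ↔ u ∈ F := by
  obtain ⟨a, b, hab, rfl⟩ := card_eq_two.mp hF
  clear hF
  wlog h : a < b generalizing a b
  · rw [pair_comm]; exact this b a hab.symm (hab.lt_or_gt.resolve_left h)
  rw [inc_pair_of_lt h]
  by_cases hua : u = a <;> by_cases hub : u = b <;> simp_all

lemma vertexCoord_bvec_ne_zero_iff {u : Fin n} {F : Finset (Fin n)} (hF : F.card = 2) :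
    vertexCoord 𝔽 u (bvec 𝔽 n 2 F) ≠ 0 ↔ u ∈ F :=
  inc_singleton_ne_zero_iff hF

lemma vertexCoord_eq_zero_of_mem_simSpan (h2 : ∀ F ∈ X, F.card = 2) {v : Fin n}
    (hv : ∀ F ∈ X, v ∉ F) {w : Csets n (2 - 1) → 𝔽} (hw : w ∈ simSpan 𝔽 n 2 X) :
    vertexCoord 𝔽 v w = 0 := by
  have : simSpan 𝔽 n 2 X ≤ LinearMap.ker (vertexCoord 𝔽 v) := simSpan_le_iff.mpr fun F hF => by
    simpa using mt (vertexCoord_bvec_ne_zero_iff (h2 F hF)).mp (hv F hF)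
  exact this hw

lemma bvec_notMem_simSpan (h2 : ∀ F ∈ X, F.card = 2) {v : Fin n} (hv : ∀ F ∈ X, v ∉ F)
    {F : Finset (Fin n)} (hF : F.card = 2) (hvF : v ∈ F) : bvec 𝔽 n 2 F ∉ simSpan 𝔽 n 2 X :=
  fun h => (vertexCoord_bvec_ne_zero_iff hF).mpr hvF (vertexCoord_eq_zero_of_mem_simSpan h2 hv h)

lemma bvec_ne_zero {F : Finset (Fin n)} (hF : F.card = 2) : bvec 𝔽 n 2 F ≠ 0 := by
  obtain ⟨a, ha⟩ := card_pos.mp (by omega : 0 < F.card)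
  exact fun h => (vertexCoord_bvec_ne_zero_iff (𝔽 := 𝔽) hF).mpr ha (by rw [h, map_zero])

lemma sdiff_suppδ_singleton (h2 : ∀ F ∈ S, F.card = 2) (v : Fin n) :
    S \ suppδ 𝔽 S {v} = S.filter (v ∉ ·) := by
  ext F
  rw [mem_sdiff, suppδ, mem_suppFin, mem_filter]
  exact and_congr_right fun hF => by
    simpa [cobdry, hF] using (inc_singleton_ne_zero_iff (𝔽 := 𝔽) (u := v) (h2 F hF)).not

lemma simClosure_empty (h2 : ∀ F ∈ S, F.card = 2) : simClosure 𝔽 n 2 S ∅ = ∅ :=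
  eq_empty_of_forall_notMem fun F hF => by
    obtain ⟨hFS, h⟩ := mem_simClosure_iff.mp hF
    exact bvec_ne_zero (h2 F hFS) (by simpa [simSpan] using h)

lemma simRank_pair {e f : Finset (Fin n)} (he : e.card = 2) (hf : f.card = 2) (hef : e ≠ f) :
    simRank 𝔽 n 2 {e, f} = 2 := by
  obtain ⟨u, hue, huf⟩ := exists_mem_notMem_of_ne hef (hf.trans he.symm).le
  have hspan : simSpan 𝔽 n 2 {e, f} = simSpan 𝔽 n 2 {f} ⊔ Submodule.span 𝔽 {bvec 𝔽 n 2 e} := by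
    rw [insert_eq, simSpan_union, sup_comm]; simp [simSpan]
  rw [simRank_eq_finrank_simSpan, hspan, Submodule.finrank_sup_span_singleton
    (bvec_notMem_simSpan (by simpa using hf) (by simpa using huf) he hue), simSpan,
    coe_singleton, Set.image_singleton, finrank_span_singleton (bvec_ne_zero hf)]

lemma exists_triangle_of_bvec_mem_simSpan_pair {e f g : Finset (Fin n)} (he : e.card = 2)
    (hf : f.card = 2) (hg : g.card = 2) (hge : g ≠ e) (hgf : g ≠ f)
    (h : bvec 𝔽 n 2 g ∈ simSpan 𝔽 n 2 {e, f}) :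
    ∃ x y z, x ≠ y ∧ y ≠ z ∧ x ≠ z ∧ e = {x, y} ∧ f = {y, z} ∧ g = {x, z} := by
  obtain ⟨α, β, hαβ⟩ : ∃ α β : 𝔽, α • bvec 𝔽 n 2 e + β • bvec 𝔽 n 2 f = bvec 𝔽 n 2 g := by
    rw [simSpan, coe_pair, Set.image_pair] at h
    exact Submodule.mem_span_pair.mp h
  have hcoord (u : Fin n) : vertexCoord 𝔽 u (bvec 𝔽 n 2 g) =
      α * vertexCoord 𝔽 u (bvec 𝔽 n 2 e) + β * vertexCoord 𝔽 u (bvec 𝔽 n 2 f) := by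
    rw [← hαβ, map_add, map_smul, map_smul, smul_eq_mul, smul_eq_mul]
  have mem {u : Fin n} {F : Finset (Fin n)} (hF : F.card = 2) :
      u ∈ F ↔ vertexCoord 𝔽 u (bvec 𝔽 n 2 F) ≠ 0 := (vertexCoord_bvec_ne_zero_iff hF).symm
  -- read `∂g = α ∂e + β ∂f` at the vertices of `g` and at the second vertex `y` of `e`
  obtain ⟨x, hxg, hxf⟩ := exists_mem_notMem_of_ne hgf (hf.trans hg.symm).le
  obtain ⟨z, hzg, hze⟩ := exists_mem_notMem_of_ne hge (he.trans hg.symm).le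
  have hx := (mem hg).mp hxg
  rw [hcoord, (mem hf).not_left.mp hxf, mul_zero, add_zero] at hx
  have hz := (mem hg).mp hzg
  rw [hcoord, (mem he).not_left.mp hze, mul_zero, zero_add] at hz
  have hxe : x ∈ e := (mem he).mpr (right_ne_zero_of_mul hx)
  have hzf : z ∈ f := (mem hf).mpr (right_ne_zero_of_mul hz)
  have hxz : x ≠ z := by rintro rfl; exact hxf hzf
  obtain ⟨y, hye, hyx⟩ : ∃ y ∈ e, y ≠ x := by
    obtain ⟨a, b, hab, rfl⟩ := card_eq_two.mp he
    by_cases hxa : x = a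
    · exact ⟨b, by simp, fun h => hab (hxa ▸ h.symm)⟩
    · exact ⟨a, by simp, Ne.symm hxa⟩
  have hyz : y ≠ z := by rintro rfl; exact hze hye
  have hyf : y ∈ f := by
    by_contra hyf
    have hy : vertexCoord 𝔽 y (bvec 𝔽 n 2 g) ≠ 0 := by
      rw [hcoord, (mem hf).not_left.mp hyf, mul_zero, add_zero]
      exact mul_ne_zero (left_ne_zero_of_mul hx) ((mem he).mp hye)
    rw [eq_pair_of_mem hg hxg hzg hxz] at hy
    simp [← mem (card_pair hxz), hyx, hyz] at hy
  exact ⟨x, y, z, hyx.symm, hyz, hxz, eq_pair_of_mem he hxe hye hyx.symm,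
    eq_pair_of_mem hf hyf hzf hyz, eq_pair_of_mem hg hxg hzg hxz⟩

lemma exists_adj_of_mem (h2 : ∀ F ∈ S, F.card = 2) {F : Finset (Fin n)} (hF : F ∈ S) {v : Fin n}
    (hv : v ∈ F) : ∃ u, (graphOf S).Adj v u ∧ F = {v, u} := by
  obtain ⟨a, b, hab, rfl⟩ := card_eq_two.mp (h2 F hF)
  rcases mem_insert.mp hv with rfl | hv
  · exact ⟨b, ⟨hab, hF⟩, rfl⟩
  · obtain rfl := mem_singleton.mp hv
    rw [pair_comm] at hF ⊢
    exact ⟨a, ⟨hab.symm, hF⟩, rfl⟩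

lemma simSpan_eq_sup_star (h2 : ∀ F ∈ S, F.card = 2) {v u₀ : Fin n} (h₀ : (graphOf S).Adj v u₀)
    (hcl : ∀ u, (graphOf S).Adj v u → u ≠ u₀ → (graphOf S).Adj u₀ u) :
    simSpan 𝔽 n 2 S = simSpan 𝔽 n 2 (S.filter (v ∉ ·)) ⊔ Submodule.span 𝔽 {bvec 𝔽 n 2 {v, u₀}} := by
  refine le_antisymm (simSpan_le_iff.mpr fun F hF => ?_)
    (sup_le (simSpan_mono (filter_subset _ _)) (by simpa using bvec_mem_simSpan h₀.2))
  by_cases hvF : v ∈ F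
  · obtain ⟨u, hu, rfl⟩ := exists_adj_of_mem h2 hF hvF
    by_cases huu₀ : u = u₀
    · exact Submodule.mem_sup_right (by simp [huu₀])
    rw [bvec_pair_mem_iff hu.ne, ← edgeVec_add_edgeVec _ u₀]
    refine Submodule.add_mem _ (Submodule.mem_sup_right ?_) (Submodule.mem_sup_left ?_)
    · exact (bvec_pair_mem_iff h₀.ne).mp (Submodule.mem_span_singleton_self _)
    · refine (bvec_pair_mem_iff (hcl u hu huu₀).ne).mp (bvec_mem_simSpan ?_)
      simp [(hcl u hu huu₀).2, h₀.ne, hu.ne]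
  · exact Submodule.mem_sup_left (bvec_mem_simSpan (mem_filter.mpr ⟨hF, hvF⟩))

lemma simRank_eq_simRank_filter_add_one (h2 : ∀ F ∈ S, F.card = 2) {v u₀ : Fin n}
    (h₀ : (graphOf S).Adj v u₀)
    (hcl : ∀ u, (graphOf S).Adj v u → u ≠ u₀ → (graphOf S).Adj u₀ u) :
    simRank 𝔽 n 2 S = simRank 𝔽 n 2 (S.filter (v ∉ ·)) + 1 := by
  rw [simRank_eq_finrank_simSpan, simSpan_eq_sup_star h2 h₀ hcl,
    Submodule.finrank_sup_span_singleton]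
  · rfl
  exact bvec_notMem_simSpan (fun F hF => h2 F (mem_filter.mp hF).1)
    (fun F hF => (mem_filter.mp hF).2) (h2 _ h₀.2) (mem_insert_self _ _)

lemma spanModular_filter_notMem (h2 : ∀ F ∈ Y, F.card = 2) {v : Fin n}
    (hv : (graphOf Y).IsClique ((graphOf Y).neighborSet v)) :
    SpanModular 𝔽 n 2 Y (Y.filter (v ∉ ·)) := by
  intro Z hZ w ⟨hwX, hwZ⟩
  have h2Z : ∀ F ∈ Z, F.card = 2 := fun F hF => h2 F (hZ.1 hF)
  by_cases hstar : ∃ u₀, (graphOf Z).Adj v u₀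
  · obtain ⟨u₀, h₀⟩ := hstar
    -- `Z` is a flat and the neighbours of `v` are pairwise adjacent, so the star of `v` in `Z`
    -- is spanned by `vu₀` and edges avoiding `v`; the `v`-coordinate of `w` then rules out `vu₀`.
    have hcl (u : Fin n) (hu : (graphOf Z).Adj v u) (huu₀ : u ≠ u₀) : (graphOf Z).Adj u₀ u := by
      have hY : (graphOf Y).Adj u₀ u := hv ⟨h₀.ne, hZ.1 h₀.2⟩ ⟨hu.ne, hZ.1 hu.2⟩ (Ne.symm huu₀)
      refine ⟨hY.ne, hZ.2 _ hY.2 ?_⟩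
      rw [bvec_pair_mem_iff hY.ne, ← edgeVec_add_edgeVec _ v, edgeVec_swap]
      exact Submodule.add_mem _ (Submodule.neg_mem _ ((bvec_pair_mem_iff h₀.ne).mp
        (bvec_mem_simSpan h₀.2))) ((bvec_pair_mem_iff hu.ne).mp (bvec_mem_simSpan hu.2))
    rw [simSpan_eq_sup_star h2Z h₀ hcl] at hwZ
    refine simSpan_mono ?_ (mem_of_mem_sup_span_singleton (φ := vertexCoord 𝔽 v) ?_ ?_ hwZ ?_)
    · intro F hF
      simp only [mem_filter, mem_inter] at hF ⊢
      exact ⟨⟨hZ.1 hF.1, hF.2⟩, hF.1⟩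
    · exact fun x hx => vertexCoord_eq_zero_of_mem_simSpan
        (fun F hF => h2Z F (mem_filter.mp hF).1) (fun F hF => (mem_filter.mp hF).2) hx
    · exact (vertexCoord_bvec_ne_zero_iff (h2Z _ h₀.2)).mpr (mem_insert_self _ _)
    · exact vertexCoord_eq_zero_of_mem_simSpan (fun F hF => h2 F (mem_filter.mp hF).1)
        (fun F hF => (mem_filter.mp hF).2) hwX
  · refine simSpan_mono (fun F hF => ?_) hwZ
    refine mem_inter.mpr ⟨mem_filter.mpr ⟨hZ.1 hF, fun hvF => hstar ?_⟩, hF⟩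
    obtain ⟨u, hu, rfl⟩ := exists_adj_of_mem h2Z hF hvF
    exact ⟨u, hu⟩

lemma isFace_two_iff {F : Finset (Fin n)} :
    IsFace 2 S F ↔ (graphOf S).IsClique (F : Set (Fin n)) := by
  refine ⟨?_, fun h => Or.inr fun G hGF hG => ?_⟩
  · rintro (h | h) x hx y hy hxy
    · exact absurd (card_le_one.mp (by omega) x hx y hy) hxy
    · exact ⟨hxy, h {x, y} (by simp [insert_subset_iff, mem_coe.mp hx, mem_coe.mp hy])
        (card_pair hxy)⟩
  · obtain ⟨a, b, hab, rfl⟩ := card_eq_two.mp hG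
    exact (h (hGF (by simp)) (hGF (by simp)) hab).2

/-- The unique facet through a simplicial vertex `v` is its closed neighbourhood. -/
lemma simplicialFace_singleton_iff {v : Fin n} :
    SimplicialFace 2 S {v} ↔
      (∃ u, (graphOf S).Adj v u) ∧ (graphOf S).IsClique ((graphOf S).neighborSet v) := by
  classical
  set G := graphOf S
  constructor
  · rintro ⟨M, ⟨hM, hvM⟩, huniq⟩
    have hMc : G.IsClique (M : Set (Fin n)) := isFace_two_iff.mp hM.1
    have hvM' : v ∈ M := hvM.subset (mem_singleton_self v)
    obtain ⟨w, hwM, hwv⟩ := exists_of_ssubset hvM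
    refine ⟨⟨w, hMc hvM' hwM (Ne.symm (by simpa using hwv))⟩, hMc.subset fun u hu => ?_⟩
    have hvu : G.IsClique (({v, u} : Finset (Fin n)) : Set (Fin n)) := by
      rw [coe_pair]; exact G.isClique_pair.mpr fun _ => hu
    obtain ⟨M', hM', hsub⟩ := exists_isFacet_superset (isFace_two_iff.mpr hvu)
    have hM'M : M' = M := huniq M' ⟨hM', (ssubset_iff_of_subset
      (singleton_subset_iff.mpr (hsub (mem_insert_self v _)))).mpr
        ⟨u, hsub (by simp), by simpa using (G.ne_of_adj hu).symm⟩⟩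
    exact hM'M ▸ hsub (by simp)
  · rintro ⟨⟨u₀, hu₀⟩, hN⟩
    set M := univ.filter fun u => u = v ∨ G.Adj v u
    have hMc : G.IsClique (M : Set (Fin n)) := by
      intro x hx y hy hxy
      simp only [M, coe_filter, mem_univ, true_and, Set.mem_ofPred_eq] at hx hy
      rcases hx with rfl | hx <;> rcases hy with rfl | hy
      exacts [absurd rfl hxy, hy, hx.symm, hN hx hy hxy]
    have hsub (X : Finset (Fin n)) (hX : IsFace 2 S X) (hvX : v ∈ X) : X ⊆ M := fun x hx => by
      by_cases hxv : x = v
      · simp [M, hxv]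
      · exact mem_filter.mpr ⟨mem_univ _, Or.inr (isFace_two_iff.mp hX (mem_coe.mpr hvX)
          (mem_coe.mpr hx) (Ne.symm hxv))⟩
    refine ⟨M, ⟨⟨isFace_two_iff.mpr hMc, fun X hX hMX =>
      hMX.antisymm (hsub X hX (hMX (by simp [M])))⟩, ?_⟩, ?_⟩
    · exact (ssubset_iff_of_subset (by simp [M])).mpr ⟨u₀, by simp [M, hu₀], by
        simpa using (G.ne_of_adj hu₀).symm⟩
    · rintro X ⟨hX, hvX⟩
      exact hX.2 M (isFace_two_iff.mpr hMc) (hsub X hX.1 (hvX.subset (mem_singleton_self v)))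

lemma DenseHyp.spanModular (h2 : ∀ F ∈ Y, F.card = 2) (h : DenseHyp 𝔽 n 2 Y X) :
    SpanModular 𝔽 n 2 Y X := by
  obtain ⟨-, V, hV, hsimp, rfl⟩ := h
  obtain ⟨v, rfl⟩ := card_eq_one.mp hV
  rw [sdiff_suppδ_singleton h2]
  exact spanModular_filter_notMem h2 (simplicialFace_singleton_iff.mp hsimp).2

lemma denseHyp_filter_notMem (h2 : ∀ F ∈ S, F.card = 2) {v u₀ : Fin n}
    (h₀ : (graphOf S).Adj v u₀) (hv : (graphOf S).IsClique ((graphOf S).neighborSet v)) :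
    DenseHyp 𝔽 n 2 S (S.filter (v ∉ ·)) := by
  refine ⟨⟨⟨filter_subset _ _, fun F hF hFX => mem_filter.mpr ⟨hF, fun hvF => ?_⟩⟩,
    (simRank_eq_simRank_filter_add_one h2 h₀ fun u hu hne => hv h₀ hu (Ne.symm hne)).symm⟩,
    {v}, card_singleton v, simplicialFace_singleton_iff.mpr ⟨⟨u₀, h₀⟩, hv⟩,
    (sdiff_suppδ_singleton h2 v).symm⟩
  exact bvec_notMem_simSpan (fun F hF => h2 F (mem_filter.mp hF).1)
    (fun F hF => (mem_filter.mp hF).2) (h2 F hF) hvF hFX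

end Graphic

namespace SimpleGraph

variable {V : Type*} {G : SimpleGraph V}

lemma _root_.chordal_iff :
    Chordal G ↔ ∀ v (c : G.Walk v v), c.IsCycle → 4 ≤ c.length → ¬ c.IsChordless := by
  simp only [Chordal, Walk.isChordless_iff_forall_mem_edges, not_forall, exists_prop]

lemma Walk.IsCycle.neighborSet_toSubgraph_eq_pair {v w a b : V} {c : G.Walk v v}
    (hc : c.IsCycle) (ha : s(w, a) ∈ c.edges) (hb : s(w, b) ∈ c.edges) (hab : a ≠ b) :
    c.toSubgraph.neighborSet w = {a, b} := by
  have hsub : ({a, b} : Set V) ⊆ c.toSubgraph.neighborSet w := by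
    rintro u (rfl | rfl) <;>
      rwa [Subgraph.mem_neighborSet, ← Subgraph.mem_edgeSet, mem_edges_toSubgraph]
  refine (Set.eq_of_subset_of_ncard_le hsub ?_ c.finite_neighborSet_toSubgraph).symm
  rw [hc.ncard_neighborSet_toSubgraph_eq_two (c.fst_mem_support_of_mem_edges ha),
    Set.ncard_pair hab]

/-- Each of `x`, `y`, `z` has both of its neighbours on the cycle among `x`, `y`, `z`, so the cycle
never leaves the triangle. -/
lemma Walk.IsCycle.length_le_three {v x y z : V} {c : G.Walk v v} (hc : c.IsCycle)
    (hxy : s(x, y) ∈ c.edges) (hyz : s(y, z) ∈ c.edges) (hxz : s(x, z) ∈ c.edges) :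
    c.length ≤ 3 := by
  classical
  have hx : x ∈ c.support := c.fst_mem_support_of_mem_edges hxy
  set c' := c.rotate x hx
  have hc' : c'.IsCycle := hc.rotate hx
  have he {e : Sym2 V} (h : e ∈ c.edges) : e ∈ c'.edges := (c.rotate_edges x hx).mem_iff.mpr h
  have hne {p q : V} (h : s(p, q) ∈ c.edges) : p ≠ q := (c.adj_of_mem_edges h).ne
  set T : Finset V := {x, y, z}
  have hclosed {w u : V} (hw : w ∈ T) (hu : c'.toSubgraph.Adj w u) : u ∈ T := by
    simp only [T, mem_insert, mem_singleton] at hw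
    have hu : u ∈ c'.toSubgraph.neighborSet w := hu
    rcases hw with rfl | rfl | rfl
    · rw [hc'.neighborSet_toSubgraph_eq_pair (he hxy) (he hxz) (hne hyz)] at hu
      rcases hu with rfl | rfl <;> simp [T]
    · rw [hc'.neighborSet_toSubgraph_eq_pair (he (Sym2.eq_swap ▸ hxy)) (he hyz) (hne hxz)] at hu
      rcases hu with rfl | rfl <;> simp [T]
    · rw [hc'.neighborSet_toSubgraph_eq_pair (he (Sym2.eq_swap ▸ hxz))
        (he (Sym2.eq_swap ▸ hyz)) (hne hxy)] at hu
      rcases hu with rfl | rfl <;> simp [T]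
  have hget (i : ℕ) : c'.getVert i ∈ T := by
    induction i with
    | zero => simp [T]
    | succ i ih =>
      rcases lt_or_ge i c'.length with hi | hi
      · exact hclosed ih (c'.toSubgraph_adj_getVert hi)
      · rw [c'.getVert_of_length_le (by omega)]; simp [T]
  have hsupp : c'.support.tail.toFinset ⊆ T := fun u hu => by
    obtain ⟨i, rfl, -⟩ := Walk.mem_support_iff_exists_getVert.mp
      (List.mem_of_mem_tail (List.mem_toFinset.mp hu))
    exact hget i
  have hlen : c'.support.tail.length = c.length := by simp [c']
  rw [← hlen, ← List.toFinset_card_of_nodup hc'.support_nodup]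
  exact (card_le_card hsupp).trans card_le_three

lemma spanningCoe_induce_adj {W : Set V} {u v : V} :
    (G.induce W).spanningCoe.Adj u v ↔ G.Adj u v ∧ u ∈ W ∧ v ∈ W := by
  constructor
  · rintro ⟨-, a, b, h, rfl, rfl⟩; exact ⟨h, a.2, b.2⟩
  · rintro ⟨h, hu, hv⟩; exact ⟨h.ne, ⟨u, hu⟩, ⟨v, hv⟩, h, rfl, rfl⟩

lemma spanningCoe_induce_mono {W W' : Set V} (h : W ⊆ W') :
    (G.induce W).spanningCoe ≤ (G.induce W').spanningCoe := fun _ _ huv => by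
  obtain ⟨huv, hu, hv⟩ := spanningCoe_induce_adj.mp huv
  exact spanningCoe_induce_adj.mpr ⟨huv, h hu, h hv⟩

lemma Reachable.mem_of_spanningCoe_induce {W : Set V} {a x : V}
    (h : (G.induce W).spanningCoe.Reachable a x) (ha : a ∈ W) : x ∈ W := by
  obtain ⟨p⟩ := h
  induction p with
  | nil => exact ha
  | cons h _ ih => exact ih (spanningCoe_induce_adj.mp h).2.2

lemma Walk.mem_of_mem_support_spanningCoe_induce {W : Set V} {u v : V}
    (p : (G.induce W).spanningCoe.Walk u v) (hu : u ∈ W) {x : V} (hx : x ∈ p.support) :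
    x ∈ W := by
  classical
  exact Reachable.mem_of_spanningCoe_induce ⟨p.takeUntil x hx⟩ hu

lemma Reachable.spanningCoe_induce_component {W : Set V} {a x : V}
    (h : (G.induce W).spanningCoe.Reachable a x) :
    (G.induce {y | (G.induce W).spanningCoe.Reachable a y}).spanningCoe.Reachable a x := by
  obtain ⟨p⟩ := h
  suffices ∀ y z (q : (G.induce W).spanningCoe.Walk y z),
      (G.induce W).spanningCoe.Reachable a y →
      (G.induce {y | (G.induce W).spanningCoe.Reachable a y}).spanningCoe.Reachable y z from
    this a x p (Reachable.refl a)
  intro y z q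
  induction q with
  | nil => exact fun _ => Reachable.refl _
  | cons h _ ih =>
    intro hy
    have hy' := hy.trans h.reachable
    exact (Adj.reachable (spanningCoe_induce_adj.mpr
      ⟨(spanningCoe_induce_adj.mp h).1, hy, hy'⟩)).trans (ih hy')

lemma Reachable.exists_adj_of_insert {W : Set V} {s a b : V} (ha : a ∈ W)
    (h : (G.induce (insert s W)).spanningCoe.Reachable a b)
    (hab : ¬ (G.induce W).spanningCoe.Reachable a b) :
    ∃ u, (G.induce W).spanningCoe.Reachable a u ∧ G.Adj u s := by
  obtain ⟨p⟩ := h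
  suffices ∀ x (q : (G.induce (insert s W)).spanningCoe.Walk x b),
      (G.induce W).spanningCoe.Reachable a x →
      ∃ u, (G.induce W).spanningCoe.Reachable a u ∧ G.Adj u s from
    this a p (Reachable.refl a)
  intro x q
  clear p
  induction q with
  | nil => exact fun hx => absurd hx hab
  | @cons x y _ hxy _ ih =>
    intro hx
    obtain ⟨hG, -, hy⟩ := spanningCoe_induce_adj.mp hxy
    by_cases hys : y = s
    · exact ⟨x, hx, hys ▸ hG⟩
    · exact ih hab (hx.trans (spanningCoe_induce_adj.mpr ⟨hG, hx.mem_of_spanningCoe_induce ha,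
        (Set.mem_insert_iff.mp hy).resolve_left hys⟩).reachable)

lemma not_reachable_spanningCoe_induce_pair {a b : V} (hab : a ≠ b) (hadj : ¬ G.Adj a b) :
    ¬ (G.induce {a, b}).spanningCoe.Reachable a b := by
  rintro ⟨_ | ⟨h, _⟩⟩
  · exact hab rfl
  · obtain ⟨hG, -, hy⟩ := spanningCoe_induce_adj.mp h
    rcases hy with rfl | rfl
    exacts [hG.ne rfl, hadj hG]

lemma Walk.isChordless_of_length_eq_dist {u v : V} (p : G.Walk u v)
    (hp : p.length = G.dist u v) : p.IsChordless := by
  refine isChordless_iff_forall_mem_edges.mpr fun x y hx hy hxy => ?_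
  obtain ⟨i, rfl, hi⟩ := mem_support_iff_exists_getVert.mp hx
  obtain ⟨j, rfl, hj⟩ := mem_support_iff_exists_getVert.mp hy
  have key {i j : ℕ} (hij : i < j) (hj : j ≤ p.length) (h : G.Adj (p.getVert i) (p.getVert j)) :
      j = i + 1 := by
    have := dist_le ((p.take i).append (cons h (p.drop j)))
    simp only [length_append, take_length, length_cons, drop_length] at this
    omega
  rcases lt_trichotomy i j with hij | rfl | hij
  · rw [key hij hj hxy, mk_mem_edges_iff_exists]; exact ⟨i, by omega, rfl⟩
  · exact absurd rfl hxy.ne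
  · rw [key hij hi hxy.symm, Sym2.eq_swap, mk_mem_edges_iff_exists]; exact ⟨j, by omega, rfl⟩

lemma Reachable.exists_isPath_isChordless {W : Set V} {s t : V} (hs : s ∈ W)
    (h : (G.induce W).spanningCoe.Reachable s t) :
    ∃ p : G.Walk s t, p.IsPath ∧ p.IsChordless ∧ ∀ x ∈ p.support, x ∈ W := by
  obtain ⟨p, hpath, hlen⟩ := h.exists_path_of_dist
  have hle := G.spanningCoe_induce_le W
  refine ⟨p.mapLe hle, hpath.mapLe hle,
    Walk.isChordless_iff_forall_mem_edges.mpr fun x y hx hy hxy => ?_,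
    fun x hx => p.mem_of_mem_support_spanningCoe_induce hs (by simpa using hx)⟩
  rw [Walk.support_mapLe_eq_support] at hx hy
  rw [Walk.edges_mapLe_eq_edges]
  exact (p.isChordless_of_length_eq_dist hlen).mem_edges hx hy (spanningCoe_induce_adj.mpr
    ⟨hxy, p.mem_of_mem_support_spanningCoe_induce hs hx,
      p.mem_of_mem_support_spanningCoe_induce hs hy⟩)

lemma Walk.two_le_length_of_not_adj {u v : V} (p : G.Walk u v) (huv : u ≠ v)
    (hadj : ¬ G.Adj u v) : 2 ≤ p.length := by
  by_contra! h
  interval_cases hp : p.length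
  · exact huv (p.eq_of_length_eq_zero hp)
  · exact hadj (p.adj_of_length_eq_one hp)

/-- The two paths close up to a cycle, which is chordless unless `s` and `t` are adjacent. -/
lemma _root_.Chordal.adj_of_isChordless {s t : V} (hG : Chordal G) (hst : s ≠ t)
    {p : G.Walk s t} {q : G.Walk t s} (hp : p.IsPath) (hq : q.IsPath) (hpc : p.IsChordless)
    (hqc : q.IsChordless) (hsep : ∀ x ∈ p.support, ∀ y ∈ q.support, x ≠ s → x ≠ t → y ≠ s →
      y ≠ t → x ≠ y ∧ ¬ G.Adj x y) : G.Adj s t := by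
  by_contra hadj
  have hp2 := p.two_le_length_of_not_adj hst hadj
  have hq2 := q.two_le_length_of_not_adj hst.symm fun h => hadj h.symm
  have hs : s ∉ p.support.tail := by
    have := hp.support_nodup; rw [← Walk.cons_tail_support, List.nodup_cons] at this; exact this.1
  have ht : t ∉ q.support.tail := by
    have := hq.support_nodup; rw [← Walk.cons_tail_support, List.nodup_cons] at this; exact this.1
  have hcyc : (p.append q).IsCycle := hp.isCycle_append hq (fun z hzp hzq => by
    have hzs : z ≠ s := fun h => hs (h ▸ hzp)
    have hzt : z ≠ t := fun h => ht (h ▸ hzq)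
    exact (hsep z (List.mem_of_mem_tail hzp) z (List.mem_of_mem_tail hzq) hzs hzt hzs hzt).1 rfl)
    (Or.inl (by omega))
  refine chordal_iff.mp hG s _ hcyc (by simp; omega) <|
    Walk.isChordless_iff_forall_mem_edges.mpr fun x y hx hy hxy => ?_
  have hends {z : V} (hz : z = s ∨ z = t) : z ∈ p.support ∧ z ∈ q.support := by
    rcases hz with rfl | rfl <;> simp
  rw [Walk.edges_append, List.mem_append]
  rw [Walk.mem_support_append_iff] at hx hy
  by_cases hxe : x = s ∨ x = t
  · rcases hy with hy | hy
    · exact Or.inl (hpc.mem_edges (hends hxe).1 hy hxy)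
    · exact Or.inr (hqc.mem_edges (hends hxe).2 hy hxy)
  by_cases hye : y = s ∨ y = t
  · rcases hx with hx | hx
    · exact Or.inl (hpc.mem_edges hx (hends hye).1 hxy)
    · exact Or.inr (hqc.mem_edges hx (hends hye).2 hxy)
  push Not at hxe hye
  rcases hx with hx | hx <;> rcases hy with hy | hy
  · exact Or.inl (hpc.mem_edges hx hy hxy)
  · exact absurd hxy (hsep x hx y hy hxe.1 hxe.2 hye.1 hye.2).2
  · exact absurd hxy.symm (hsep y hy x hx hye.1 hye.2 hxe.1 hxe.2).2
  · exact Or.inr (hqc.mem_edges hx hy hxy)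

/-- Shortest paths from `s` to `t` through the component of `a` and back through that of `b`
form a chordless cycle. -/
lemma _root_.Chordal.adj_of_separates (hG : Chordal G) {W : Set V} {a b s t : V} (ha : a ∈ W)
    (hb : b ∈ W) (hab : ¬ (G.induce W).spanningCoe.Reachable a b) (hst : s ≠ t)
    (has : ∃ u, (G.induce W).spanningCoe.Reachable a u ∧ G.Adj u s)
    (hat : ∃ u, (G.induce W).spanningCoe.Reachable a u ∧ G.Adj u t)
    (hbs : ∃ u, (G.induce W).spanningCoe.Reachable b u ∧ G.Adj u s)
    (hbt : ∃ u, (G.induce W).spanningCoe.Reachable b u ∧ G.Adj u t) : G.Adj s t := by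
  set R := (G.induce W).spanningCoe
  have path (c x y : V) (hx : ∃ u, R.Reachable c u ∧ G.Adj u x)
      (hy : ∃ u, R.Reachable c u ∧ G.Adj u y) : ∃ p : G.Walk x y, p.IsPath ∧ p.IsChordless ∧
        ∀ z ∈ p.support, z = x ∨ z = y ∨ R.Reachable c z := by
    obtain ⟨ux, hux, hxG⟩ := hx
    obtain ⟨uy, huy, hyG⟩ := hy
    set U := insert x (insert y {z | R.Reachable c z})
    have hK : {z | R.Reachable c z} ⊆ U := (Set.subset_insert _ _).trans (Set.subset_insert _ _)
    have hreach : (G.induce U).spanningCoe.Reachable x y := by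
      refine (spanningCoe_induce_adj.mpr ⟨hxG.symm, Set.mem_insert _ _, hK hux⟩).reachable.trans
        (((hux.spanningCoe_induce_component.symm.trans huy.spanningCoe_induce_component).mono
          (spanningCoe_induce_mono hK)).trans ?_)
      exact (spanningCoe_induce_adj.mpr ⟨hyG, hK huy, by simp [U]⟩).reachable
    obtain ⟨p, hp, hpc, hpU⟩ := hreach.exists_isPath_isChordless (Set.mem_insert _ _)
    exact ⟨p, hp, hpc, fun z hz => by simpa [U] using hpU z hz⟩
  obtain ⟨p, hp, hpc, hpK⟩ := path a s t has hat
  obtain ⟨q, hq, hqc, hqK⟩ := path b t s hbt hbs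
  refine hG.adj_of_isChordless hst hp hq hpc hqc fun x hx y hy hxs hxt hys hyt => ?_
  have hax := ((hpK x hx).resolve_left hxs).resolve_left hxt
  have hby := ((hqK y hy).resolve_left hyt).resolve_left hys
  refine ⟨fun hxy => hab (hax.trans (hxy ▸ hby.symm)), fun hxy => hab (hax.trans ?_)⟩
  exact (spanningCoe_induce_adj.mpr ⟨hxy, hax.mem_of_spanningCoe_induce ha,
    hby.mem_of_spanningCoe_induce hb⟩).reachable.trans hby.symm

lemma exists_minimal_separator [DecidableEq V] {A : Finset V} {a b : V} (hab : a ≠ b)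
    (hadj : ¬ G.Adj a b) :
    ∃ S ⊆ A \ {a, b}, ¬ (G.induce ↑(A \ S)).spanningCoe.Reachable a b ∧
      ∀ s ∈ S, (G.induce ↑(A \ S.erase s)).spanningCoe.Reachable a b := by
  classical
  set 𝒮 := (A \ {a, b}).powerset.filter fun S => ¬ (G.induce ↑(A \ S)).spanningCoe.Reachable a b
  have hne : 𝒮.Nonempty := ⟨A \ {a, b}, mem_filter.mpr ⟨mem_powerset_self _, fun h =>
    not_reachable_spanningCoe_induce_pair hab hadj (h.mono (spanningCoe_induce_mono
      (by intro x; simp +contextual [sdiff_sdiff_right_self])))⟩⟩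
  obtain ⟨S, hS, hmin⟩ := 𝒮.exists_min_image card hne
  obtain ⟨hSsub, hsep⟩ := mem_filter.mp hS
  refine ⟨S, mem_powerset.mp hSsub, hsep, fun s hs => ?_⟩
  by_contra h
  have := hmin (S.erase s) (mem_filter.mpr ⟨mem_powerset.mpr ((erase_subset s S).trans
    (mem_powerset.mp hSsub)), h⟩)
  rw [card_erase_of_mem hs] at this
  have := card_pos.mpr ⟨s, hs⟩
  omega

def IsSimplicialIn (G : SimpleGraph V) (A : Set V) (x : V) : Prop :=
  G.IsClique (A ∩ G.neighborSet x)

lemma exists_isSimplicialIn_of_closed {A B S : Finset V} (hS : G.IsClique (S : Set V))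
    (hclosed : ∀ x ∈ B, x ∉ S → ↑A ∩ G.neighborSet x ⊆ B) {v : V} (hvB : v ∈ B) (hvS : v ∉ S)
    (hB : G.IsClique (B : Set V) ∨ ∃ x ∈ B, ∃ y ∈ B, x ≠ y ∧ ¬ G.Adj x y ∧
      G.IsSimplicialIn B x ∧ G.IsSimplicialIn B y) :
    ∃ x ∈ B, x ∉ S ∧ G.IsSimplicialIn A x := by
  have hsub {x : V} (hxB : x ∈ B) (hxS : x ∉ S) : ↑A ∩ G.neighborSet x ⊆ ↑B ∩ G.neighborSet x :=
    Set.subset_inter (hclosed x hxB hxS) Set.inter_subset_right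
  rcases hB with hB | ⟨x, hx, y, hy, hxy, hnadj, hsx, hsy⟩
  · exact ⟨v, hvB, hvS, hB.subset ((hsub hvB hvS).trans Set.inter_subset_left)⟩
  by_cases hxS : x ∈ S
  · have hyS : y ∉ S := fun hyS => hnadj (hS hxS hyS hxy)
    exact ⟨y, hy, hyS, hsy.subset (hsub hy hyS)⟩
  · exact ⟨x, hx, hxS, hsx.subset (hsub hx hxS)⟩

lemma exists_reachable_isSimplicialIn [DecidableEq V] {A S : Finset V}
    (hS : G.IsClique (S : Set V)) {v w : V} (hv : v ∈ A \ S) (hw : w ∈ A \ S)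
    (hvw : ¬ (G.induce ↑(A \ S)).spanningCoe.Reachable v w)
    (ih : ∀ B ⊂ A, G.IsClique (B : Set V) ∨ ∃ x ∈ B, ∃ y ∈ B, x ≠ y ∧ ¬ G.Adj x y ∧
      G.IsSimplicialIn B x ∧ G.IsSimplicialIn B y) :
    ∃ x ∈ A, (G.induce ↑(A \ S)).spanningCoe.Reachable v x ∧ G.IsSimplicialIn A x := by
  classical
  set R := (G.induce ↑(A \ S)).spanningCoe
  set B := A.filter fun u => u ∈ S ∨ R.Reachable v u
  have hBA : B ⊂ A := Finset.ssubset_iff_subset_ne.mpr ⟨filter_subset _ _, fun h => by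
    have := h ▸ (mem_sdiff.mp hw).1
    simp only [B, mem_filter] at this
    exact this.2.elim (mem_sdiff.mp hw).2 hvw⟩
  have hclosed : ∀ x ∈ B, x ∉ S → ↑A ∩ G.neighborSet x ⊆ B := by
    intro x hxB hxS u ⟨huA, hxu⟩
    have hvx := (mem_filter.mp hxB).2.resolve_left hxS
    refine mem_filter.mpr ⟨huA, or_iff_not_imp_left.mpr fun huS => hvx.trans ?_⟩
    exact (spanningCoe_induce_adj.mpr ⟨hxu, hvx.mem_of_spanningCoe_induce hv,
      mem_sdiff.mpr ⟨huA, huS⟩⟩).reachable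
  obtain ⟨x, hxB, hxS, hx⟩ := exists_isSimplicialIn_of_closed hS hclosed
    (mem_filter.mpr ⟨(mem_sdiff.mp hv).1, Or.inr (Reachable.refl v)⟩) (mem_sdiff.mp hv).2 (ih B hBA)
  exact ⟨x, filter_subset _ _ hxB, (mem_filter.mp hxB).2.resolve_left hxS, hx⟩

/-- Dirac: a minimal separator of two nonadjacent vertices is a clique, and induction on each
side of it yields a simplicial vertex there. -/
theorem _root_.Chordal.isClique_or_exists_isSimplicialIn [DecidableEq V] (hG : Chordal G)
    (A : Finset V) : G.IsClique (A : Set V) ∨ ∃ x ∈ A, ∃ y ∈ A, x ≠ y ∧ ¬ G.Adj x y ∧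
      G.IsSimplicialIn A x ∧ G.IsSimplicialIn A y := by
  induction A using Finset.strongInduction with
  | H A ih =>
  by_cases hA : G.IsClique (A : Set V)
  · exact Or.inl hA
  right
  obtain ⟨a, ha, b, hb, hab, hadj⟩ : ∃ a ∈ A, ∃ b ∈ A, a ≠ b ∧ ¬ G.Adj a b := by
    simpa [IsClique, Set.Pairwise] using hA
  obtain ⟨S, hSsub, hsep, hmin⟩ := exists_minimal_separator (G := G) (A := A) hab hadj
  set R := (G.induce ↑(A \ S)).spanningCoe
  have haS : a ∈ A \ S := mem_sdiff.mpr ⟨ha, fun h => by simpa using (mem_sdiff.mp (hSsub h)).2⟩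
  have hbS : b ∈ A \ S := mem_sdiff.mpr ⟨hb, fun h => by simpa using (mem_sdiff.mp (hSsub h)).2⟩
  have hnbr {s : V} (hs : s ∈ S) :
      (∃ u, R.Reachable a u ∧ G.Adj u s) ∧ (∃ u, R.Reachable b u ∧ G.Adj u s) := by
    have hsub : (↑(A \ S.erase s) : Set V) ⊆ insert s ↑(A \ S) := fun x hx => by
      by_cases hxs : x = s <;> simp_all
    have h := (hmin s hs).mono (spanningCoe_induce_mono hsub)
    exact ⟨h.exists_adj_of_insert haS hsep,
      h.symm.exists_adj_of_insert hbS fun h' => hsep h'.symm⟩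
  have hS : G.IsClique (S : Set V) := fun s hs t ht hst =>
    hG.adj_of_separates haS hbS hsep hst (hnbr hs).1 (hnbr ht).1 (hnbr hs).2 (hnbr ht).2
  obtain ⟨x, hxA, hax, hx⟩ := exists_reachable_isSimplicialIn hS haS hbS hsep ih
  obtain ⟨y, hyA, hby, hy⟩ := exists_reachable_isSimplicialIn hS hbS haS (fun h => hsep h.symm) ih
  refine ⟨x, hxA, y, hyA, fun hxy => hsep (hax.trans (hxy ▸ hby.symm)), fun hxy => ?_, hx, hy⟩
  exact hsep (hax.trans ((spanningCoe_induce_adj.mpr ⟨hxy, hax.mem_of_spanningCoe_induce haS,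
    hby.mem_of_spanningCoe_induce hbS⟩).reachable.trans hby.symm))

theorem _root_.Chordal.exists_isClique_neighborSet [Fintype V] (hG : Chordal G) {u v : V}
    (huv : G.Adj u v) : ∃ x, (∃ y, G.Adj x y) ∧ G.IsClique (G.neighborSet x) := by
  classical
  set A := univ.filter fun x => ∃ y, G.Adj x y
  have hN (x : V) : G.neighborSet x ⊆ A := fun y hy => by simpa [A] using ⟨x, hy.symm⟩
  rcases hG.isClique_or_exists_isSimplicialIn A with hA | ⟨x, hxA, -, -, -, -, hx, -⟩
  · exact ⟨u, ⟨v, huv⟩, hA.subset (hN u)⟩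
  · exact ⟨x, (mem_filter.mp hxA).2, by rwa [IsSimplicialIn, Set.inter_eq_right.mpr (hN x)] at hx⟩

lemma _root_.Chordal.spanningCoe_induce (hG : Chordal G) (W : Set V) :
    Chordal (G.induce W).spanningCoe := by
  refine chordal_iff.mpr fun v c hc hlen hchord => chordal_iff.mp hG v
    (c.mapLe (G.spanningCoe_induce_le W)) (hc.mapLe _) (by simpa using hlen) ?_
  rw [Walk.isChordless_iff_forall_mem_edges] at hchord ⊢
  intro x y hx hy hxy
  simp only [Walk.support_mapLe_eq_support, Walk.edges_mapLe_eq_edges] at hx hy ⊢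
  have hv : v ∈ W := (spanningCoe_induce_adj.mp (c.adj_snd hc.not_nil)).2.1
  exact hchord hx hy (spanningCoe_induce_adj.mpr ⟨hxy,
    c.mem_of_mem_support_spanningCoe_induce hv hx, c.mem_of_mem_support_spanningCoe_induce hv hy⟩)

end SimpleGraph

section Stanley

variable {𝔽 : Type*} [Field 𝔽] {n : ℕ} {S X Y : Finset (Finset (Fin n))}

lemma toFinset_mem_of_mem_edges {u v : Fin n} {p : (graphOf S).Walk u v} {t : Sym2 (Fin n)}
    (ht : t ∈ p.edges) : t.toFinset ∈ S := by
  induction t using Sym2.ind with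
  | _ a b => rw [Sym2.toFinset_mk_eq]; exact (p.adj_of_mem_edges ht).2

lemma sum_edgeVec_darts {G : SimpleGraph (Fin n)} {u v : Fin n} (p : G.Walk u v) :
    (p.darts.map fun d => edgeVec 𝔽 d.fst d.snd).sum = edgeVec 𝔽 u v := by
  induction p with
  | nil => simp
  | cons h p ih => simp [ih, edgeVec_add_edgeVec]

lemma bvec_dart_mem_iff {G : SimpleGraph (Fin n)} (d : G.Dart)
    {U : Submodule 𝔽 (Csets n (2 - 1) → 𝔽)} :
    bvec 𝔽 n 2 d.edge.toFinset ∈ U ↔ edgeVec 𝔽 d.fst d.snd ∈ U := by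
  rw [Dart.edge, Sym2.toFinset_mk_eq, bvec_pair_mem_iff d.adj.ne]

/-- The boundaries of the darts of a closed walk sum to `0`. -/
lemma bvec_mem_simSpan_of_isTrail {G : SimpleGraph (Fin n)} {v : Fin n} {c : G.Walk v v}
    (hc : c.IsTrail) {t : Sym2 (Fin n)} (ht : t ∈ c.edges)
    (hX : ∀ t' ∈ c.edges, t' ≠ t → t'.toFinset ∈ X) :
    bvec 𝔽 n 2 t.toFinset ∈ simSpan 𝔽 n 2 X := by
  classical
  obtain ⟨d, hd, rfl⟩ := List.mem_map.mp ht
  have hsum := List.sum_map_erase (fun d : G.Dart => edgeVec 𝔽 d.fst d.snd) hd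
  rw [sum_edgeVec_darts, edgeVec_self, add_eq_zero_iff_eq_neg] at hsum
  rw [bvec_dart_mem_iff, hsum]
  refine Submodule.neg_mem _ (list_sum_mem fun w hw => ?_)
  obtain ⟨d', hd', rfl⟩ := List.mem_map.mp hw
  obtain ⟨hne, hd'c⟩ := ((hc.edges_nodup.of_map _).mem_erase_iff).mp hd'
  refine (bvec_dart_mem_iff d').mp (bvec_mem_simSpan (hX _ (List.mem_map_of_mem hd'c) fun h => ?_))
  exact hne (List.inj_on_of_nodup_map hc.edges_nodup hd'c hd h)

/-- Two edges of the cycle outside `X` span a line meeting `X` in a third edge; the three form a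
triangle, whose third side would be a chord. -/
lemma edges_mem_of_isChordless (h2 : ∀ F ∈ S, F.card = 2) (hX : ModularFlat 𝔽 n 2 S X)
    (hY : SimFlat 𝔽 n 2 S Y) (hXY : X ⊆ Y) (hr : simRank 𝔽 n 2 Y = simRank 𝔽 n 2 X + 1)
    {v : Fin n} {c : (graphOf S).Walk v v} (hc : c.IsCycle) (hlen : 4 ≤ c.length)
    (hchord : c.IsChordless) (hcY : ∀ t ∈ c.edges, t.toFinset ∈ Y) :
    ∀ t ∈ c.edges, t.toFinset ∈ X := by
  by_contra! ⟨t, ht, htX⟩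
  obtain ⟨t', ht', htt', ht'X⟩ : ∃ t' ∈ c.edges, t' ≠ t ∧ t'.toFinset ∉ X := by
    by_contra! hone
    exact htX (hX.1.2 _ (toFinset_mem_of_mem_edges ht)
      (bvec_mem_simSpan_of_isTrail hc.isTrail ht hone))
  have hcard {s : Sym2 (Fin n)} (hs : s ∈ c.edges) := h2 _ (toFinset_mem_of_mem_edges hs)
  have hne : t.toFinset ≠ t'.toFinset := fun h => htt' (Sym2.toFinset_injective h).symm
  obtain ⟨g, hgX, hg⟩ := hX.exists_mem_simSpan_pair hY hXY hr (hcY t ht) (hcY t' ht')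
    (simRank_pair (hcard ht) (hcard ht') hne)
  obtain ⟨x, y, z, -, -, hxz, hxy, hyz, rfl⟩ := exists_triangle_of_bvec_mem_simSpan_pair
    (hcard ht) (hcard ht') (h2 _ (hX.1.1 hgX)) (fun h => htX (h ▸ hgX))
    (fun h => ht'X (h ▸ hgX)) hg
  rw [← Sym2.toFinset_mk_eq] at hxy hyz
  rw [Sym2.toFinset_injective hxy] at ht
  rw [Sym2.toFinset_injective hyz] at ht'
  have hxz' := hchord.mem_edges (c.fst_mem_support_of_mem_edges ht)
    (c.snd_mem_support_of_mem_edges ht') ⟨hxz, hX.1.1 hgX⟩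
  have := hc.length_le_three ht ht' hxz'
  omega

lemma simRank_eq_of_modular_chain {X : ℕ → Finset (Finset (Fin n))}
    (hXr : X (simRank 𝔽 n 2 S) = S) (hchain : ∀ i < simRank 𝔽 n 2 S, X i ⊂ X (i + 1))
    (hmod : ∀ i ≤ simRank 𝔽 n 2 S, ModularFlat 𝔽 n 2 S (X i)) {i : ℕ}
    (hi : i ≤ simRank 𝔽 n 2 S) : simRank 𝔽 n 2 (X i) = i :=
  eq_self_of_strictMono_of_apply_le (f := fun i => simRank 𝔽 n 2 (X i))
    (fun j hj => ((hmod j hj.le).1.of_subset (hchain j hj).subset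
      (hmod (j + 1) hj).1.1).simRank_lt (hchain j hj)) (by rw [hXr]) hi

theorem Supersolvable.chordal (h2 : ∀ F ∈ S, F.card = 2) (h : Supersolvable 𝔽 n 2 S) :
    Chordal (graphOf S) := by
  obtain ⟨X, hX0, hXr, hchain, hmod⟩ := h
  refine chordal_iff.mpr fun v c hc hlen hchord => ?_
  have hin (i : ℕ) (hi : i ≤ simRank 𝔽 n 2 S) : ∀ t ∈ c.edges, t.toFinset ∈ X i := by
    induction hi using Nat.decreasingInduction with
    | self => intro t ht; rw [hXr]; exact toFinset_mem_of_mem_edges ht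
    | of_succ i hi ih =>
      exact edges_mem_of_isChordless h2 (hmod i hi.le) (hmod (i + 1) hi).1 (hchain i hi).subset
        (by rw [simRank_eq_of_modular_chain hXr hchain hmod hi,
          simRank_eq_of_modular_chain hXr hchain hmod hi.le]) hc hlen hchord ih
  obtain ⟨t, ht⟩ := List.exists_mem_of_length_pos (by rw [c.length_edges]; omega)
  have := hin 0 (Nat.zero_le _) t ht
  rw [hX0, simClosure_empty h2] at this
  exact absurd this (notMem_empty _)

end Stanley

section Equivalence

variable {𝔽 : Type*} [Field 𝔽] {n : ℕ} {S : Finset (Finset (Fin n))}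

theorem Superdense.supersolvable (h2 : ∀ F ∈ S, F.card = 2) (h : Superdense 𝔽 n 2 S) :
    Supersolvable 𝔽 n 2 S := by
  obtain ⟨X, hX0, hXr, hflat, hchain, hdense⟩ := h
  have hmod (i : ℕ) (hi : i ≤ simRank 𝔽 n 2 S) : SpanModular 𝔽 n 2 S (X i) := by
    induction hi using Nat.decreasingInduction with
    | self => rw [hXr]; exact spanModular_self S
    | of_succ i hi ih =>
      have hsub := (hflat (i + 1) hi).1
      exact ih.trans (hchain i hi).subset hsub
        ((hdense i hi).spanModular fun F hF => h2 F (hsub hF))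
  exact ⟨X, by rw [simClosure_empty h2, hX0], hXr, hchain,
    fun i hi => (hmod i hi).modularFlat (hflat i hi)⟩

lemma graphOf_filter_notMem (v : Fin n) :
    graphOf (S.filter (v ∉ ·)) = ((graphOf S).induce {v}ᶜ).spanningCoe := by
  ext x y
  rw [SimpleGraph.spanningCoe_induce_adj]
  simp only [graphOf, mem_filter, mem_insert, mem_singleton, Set.mem_compl_iff,
    Set.mem_singleton_iff]
  tauto

theorem Chordal.superdense (h2 : ∀ F ∈ S, F.card = 2) (hS : Chordal (graphOf S)) :
    Superdense 𝔽 n 2 S := by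
  induction S using Finset.strongInduction with
  | H S ih =>
  obtain rfl | ⟨F, hF⟩ := S.eq_empty_or_nonempty
  · exact superdense_empty
  obtain ⟨a, b, hab, rfl⟩ := card_eq_two.mp (h2 F hF)
  obtain ⟨v, ⟨u₀, h₀⟩, hv⟩ := hS.exists_isClique_neighborSet (u := a) (v := b) ⟨hab, hF⟩
  refine (ih _ (filter_ssubset.mpr ⟨_, h₀.2, by simp⟩) (fun F hF => h2 F (mem_filter.mp hF).1)
    ?_).of_denseHyp (denseHyp_filter_notMem h2 h₀ hv)
  rw [graphOf_filter_notMem]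
  exact hS.spanningCoe_induce _

end Equivalence

theorem stmt16_general (𝔽 : Type*) [Field 𝔽] (n : ℕ)
    (S2 : Finset (Finset (Fin n))) (hS2 : ∀ F ∈ S2, F.card = 2) :
    Superdense 𝔽 n 2 S2 ↔ Supersolvable 𝔽 n 2 S2 :=
  ⟨Superdense.supersolvable hS2, fun h => (h.chordal hS2).superdense hS2⟩

theorem stmt16 (𝔽 : Type*) [Field 𝔽] (n : ℕ) (hn : 2 ≤ n)
    (S2 : Finset (Finset (Fin n))) (hS2 : ∀ F ∈ S2, F.card = 2) :
    Superdense 𝔽 n 2 S2 ↔ Supersolvable 𝔽 n 2 S2 :=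
  stmt16_general 𝔽 n S2 hS2
end

section
/- Let 𝔽 be a field of characteristic different from 2 and let S_3 = {{1,2,4},{1,2,6},{1,3,4},{1,3,5},{1,5,6},{2,3,5},{2,3,6},{2,4,5},{3,4,6},{4,5,6}} ⊆ C([6],3) (the triangles of the minimal triangulation of the projective plane). Then the ten vectors {∂_3 F : F ∈ S_3} are linearly independent in 𝔽^{C([6],2)}; equivalently, the simplicial matroid Sim_3^6(S_3) over 𝔽 has no circuits. -/
/-!
Common definitions for simplicial matroids, following Cordovil–Lemos–Linhares Sales,
"Dirac's theorem on simplicial matroids".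

We model `[n] = {1,…,n}` by `Fin n`, and a subset of `[n]` by a `Finset (Fin n)`.
A family `S_k ⊆ C([n],k)` is a `Finset (Finset (Fin n))` (all of whose members
have cardinality `k`, which is imposed by hypotheses in the theorems).
-/

open Finset

/-- The triangles of the minimal triangulation of the projective plane, on 6 vertices.
(Vertices are relabelled from `{1,…,6}` to `Fin 6 = {0,…,5}` by `i ↦ i - 1`.) -/
def projPlaneS3 : Finset (Finset (Fin 6)) :=
  {{0,1,3}, {0,1,5}, {0,2,3}, {0,2,4}, {0,4,5}, {1,2,4}, {1,2,5}, {1,3,4}, {2,3,5}, {3,4,5}}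
/-!
The ten triangles triangulate the real projective plane, and a linear dependence among their
boundaries is a 2-cycle `g` on it. Every edge lies in exactly two triangles, so the cycle
condition at an edge says that `g` takes opposite or equal values on the two triangles through
it; as the triangles are connected through edges, `g` vanishes as soon as it vanishes on one
triangle. Going once around a Möbius band in the projective plane returns to the starting
triangle with the orientation reversed, which forces `2 • g F = 0`.
-/

def IsCycle (𝔽 : Type*) [Field 𝔽] (n k : ℕ) (S : Finset (Finset (Fin n)))
    (g : Finset (Fin n) → 𝔽) : Prop :=
  ∀ e : Csets n (k - 1), ∑ F ∈ S, g F * inc e.1 F = 0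

theorem linearIndependent_bvec_of_isCycle {𝔽 : Type*} [Field 𝔽] {n k : ℕ}
    {S : Finset (Finset (Fin n))} (h : ∀ g, IsCycle 𝔽 n k S g → ∀ F ∈ S, g F = 0) :
    LinearIndependent 𝔽 (fun F : S => bvec 𝔽 n k F.1) := by
  classical
  rw [Fintype.linearIndependent_iff]
  intro c hc F
  let g : Finset (Fin n) → 𝔽 := fun F => if hF : F ∈ S then c ⟨F, hF⟩ else 0
  have hg : IsCycle 𝔽 n k S g := fun e => by
    rw [← Finset.sum_attach]
    simpa [g, bvec, mul_comm] using congrFun hc e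
  simpa [g] using h g hg F F.2

theorem not_simCircuit_of_linearIndependent {𝔽 : Type*} [Field 𝔽] {n k : ℕ}
    {S : Finset (Finset (Fin n))} (hS : LinearIndependent 𝔽 (fun F : S => bvec 𝔽 n k F.1))
    (C : Finset (Finset (Fin n))) : ¬ SimCircuit 𝔽 n k S C := by
  rintro ⟨hCS, hdep, -⟩
  let incl : C → S := fun F => ⟨F.1, hCS F.2⟩
  have hincl : Function.Injective incl := fun a b h => Subtype.ext (by simpa [incl] using h)
  exact hdep (hS.comp incl hincl)

set_option maxHeartbeats 1000000 in
theorem projPlaneS3_isCycle_eq_zero {𝔽 : Type*} [Field 𝔽] (h2 : (2 : 𝔽) ≠ 0)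
    {g : Finset (Fin 6) → 𝔽} (hg : IsCycle 𝔽 6 3 projPlaneS3 g) :
    ∀ F ∈ projPlaneS3, g F = 0 := by
  have edge (e : Finset (Fin 6)) (he : #e = 2) : ∑ F ∈ projPlaneS3, g F * inc e F = 0 :=
    hg ⟨e, he⟩
  -- the Möbius band 013, 023, 024, 124, 134, glued along the edges 03, 02, 24, 14 and back along 13
  have e02 := edge {0,2} rfl
  have e03 := edge {0,3} rfl
  have e13 := edge {1,3} rfl
  have e14 := edge {1,4} rfl
  have e24 := edge {2,4} rfl
  simp +decide [projPlaneS3, inc] at e02 e03 e13 e14 e24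
  have h013 : g {0,1,3} = 0 := by
    have h : 2 * g {0,1,3} = 0 := by linear_combination e02 + e03 - e13 - e14 - e24
    exact (mul_eq_zero.mp h).resolve_left h2
  -- together with the edges above these connect all ten triangles, so the zero propagates
  have e01 := edge {0,1} rfl
  have e05 := edge {0,5} rfl
  have e12 := edge {1,2} rfl
  have e23 := edge {2,3} rfl
  have e34 := edge {3,4} rfl
  simp +decide [projPlaneS3, inc] at e01 e05 e12 e23 e34
  simp only [projPlaneS3, mem_insert, mem_singleton]
  clear edge hg
  simp_all

theorem stmt17 (𝔽 : Type*) [Field 𝔽] (hchar : ringChar 𝔽 ≠ 2) :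
    LinearIndependent 𝔽 (fun F : projPlaneS3 => bvec 𝔽 6 3 F.1) ∧
      ∀ C, ¬ SimCircuit 𝔽 6 3 projPlaneS3 C := by
  have hli : LinearIndependent 𝔽 (fun F : projPlaneS3 => bvec 𝔽 6 3 F.1) :=
    linearIndependent_bvec_of_isCycle fun _ hg =>
      projPlaneS3_isCycle_eq_zero (Ring.two_ne_zero hchar) hg
  exact ⟨hli, not_simCircuit_of_linearIndependent hli⟩
end

section
/- Let 𝔽 be a field and let S_3 = {{1,2,3},{1,2,4},{1,2,5},{1,4,5},{2,4,5},{1,3,6},{1,3,7},{1,6,7},{3,6,7},{2,3,8},{2,3,9},{2,8,9},{3,8,9}} ⊆ C([9],3). Then the simplicial matroid Sim_3^9(S_3) over 𝔽 has rank 10, and the 3-hyperclique complex ⟨S_3⟩ is D-perfect; in fact the sequence ({4,5},{6,7},{8,9},{1,5},{1,4},{1,6},{1,7},{2,8},{2,9},{1,2}) is a basic linear sequence witnessing that ⟨S_3⟩ is D-perfect. -/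
/-!
Common definitions for simplicial matroids, following Cordovil–Lemos–Linhares Sales,
"Dirac's theorem on simplicial matroids".

We model `[n] = {1,…,n}` by `Fin n`, and a subset of `[n]` by a `Finset (Fin n)`.
A family `S_k ⊆ C([n],k)` is a `Finset (Finset (Fin n))` (all of whose members
have cardinality `k`, which is imposed by hypotheses in the theorems).
-/

open Finset

/-- The family `S_3` of the example on `[9]` (vertices relabelled `i ↦ i - 1` to `Fin 9`). -/
def exS3 : Finset (Finset (Fin 9)) :=
  {{0,1,2}, {0,1,3}, {0,1,4}, {0,3,4}, {1,3,4}, {0,2,5}, {0,2,6}, {0,5,6}, {2,5,6},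
   {1,2,7}, {1,2,8}, {1,7,8}, {2,7,8}}

/-- The sequence `45, 67, 89, 15, 14, 16, 17, 28, 29, 12` (relabelled `i ↦ i - 1`). -/
def exVseq : ℕ → Finset (Fin 9) := fun j =>
  [({3,4} : Finset (Fin 9)), {5,6}, {7,8}, {0,4}, {0,3}, {0,5}, {0,6}, {1,7}, {1,8}, {0,1}].getD j ∅

/-!
The coboundary `δV` is a linear functional (the `V`-coordinate) on the boundary vectors that
vanishes exactly off `supp(δV)`, so every nonempty deletion `Δ ↦ Δ ∖∖ V` strictly lowers the rank.
The thirteen triangles contain the boundaries of the three tetrahedra `1245`, `1367`, `2389`,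
so the rank is at most `13 - 3 = 10`. Ten strict drops from a rank of at most ten force the
rank to be exactly ten and each drop to be exactly one; a coboundary support whose complement
has corank one is a cocircuit. Finally, at each stage the star of `V_j` is a single face, so
`V_j` is simplicial.
-/

section Incidence

variable {n : ℕ}

lemma inc_erase_self {F : Finset (Fin n)} {i : Fin n} (hi : i ∈ F) :
    inc (F.erase i) F = (-1) ^ #(F.filter (· ≤ i)) := by
  rw [inc, sum_eq_single_of_mem i hi, if_pos rfl]
  intro j hj hji
  exact if_neg fun h => hji (erase_injOn F hj hi h.symm)

lemma inc_eq_zero_of_forall_ne {F' F : Finset (Fin n)} (h : ∀ i ∈ F, F' ≠ F.erase i) :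
    inc F' F = 0 :=
  sum_eq_zero fun i hi => if_neg (h i hi)

lemma cast_inc_eq_zero_iff {𝔽 : Type*} [Field 𝔽] {F' F : Finset (Fin n)} :
    ((inc F' F : ℤ) : 𝔽) = 0 ↔ inc F' F = 0 := by
  refine ⟨fun h => ?_, fun h => by rw [h, Int.cast_zero]⟩
  by_contra hne
  obtain ⟨i, hi, rfl⟩ : ∃ i ∈ F, F' = F.erase i := by
    by_contra! h'
    exact hne (inc_eq_zero_of_forall_ne h')
  simp [inc_erase_self hi] at h

lemma card_filter_le_erase_add_one {α : Type*} [LinearOrder α] {T : Finset α} {x y : α}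
    (hx : x ∈ T) (hxy : x < y) :
    #((T.erase x).filter (· ≤ y)) + 1 = #(T.filter (· ≤ y)) := by
  rw [filter_erase, card_erase_add_one (mem_filter.2 ⟨hx, hxy.le⟩)]

lemma filter_le_erase_of_lt {α : Type*} [LinearOrder α] {T : Finset α} {x y : α} (hyx : y < x) :
    (T.erase x).filter (· ≤ y) = T.filter (· ≤ y) := by
  rw [filter_erase, erase_eq_of_notMem (by simp [hyx.not_ge])]

/-- `∂ ∘ ∂ = 0`, coordinatewise. -/
theorem sum_inc_erase_mul_inc (T G : Finset (Fin n)) :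
    ∑ x ∈ T, inc (T.erase x) T * inc G (T.erase x) = 0 := by
  set g : Fin n → Fin n → ℤ := fun x y => if x ≠ y ∧ G = (T.erase x).erase y then
    (-1) ^ (#(T.filter (· ≤ x)) + #((T.erase x).filter (· ≤ y))) else 0
  have hsum : ∑ x ∈ T, inc (T.erase x) T * inc G (T.erase x) = ∑ x ∈ T, ∑ y ∈ T, g x y := by
    refine sum_congr rfl fun x hx => ?_
    rw [inc_erase_self hx, inc, mul_sum, ← sum_erase T (by simp [g] : g x x = 0)]
    refine sum_congr rfl fun y hy => ?_
    simp only [g, ne_of_mem_erase hy |>.symm, ne_eq, not_false_eq_true, true_and]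
    split_ifs <;> simp [pow_add]
  have hanti_lt : ∀ x ∈ T, ∀ y, x < y → g y x = -g x y := by
    intro x hx y hxy
    have hcond : (y ≠ x ∧ G = (T.erase y).erase x) ↔ (x ≠ y ∧ G = (T.erase x).erase y) := by
      rw [erase_right_comm, ne_comm]
    simp only [g, hcond, filter_le_erase_of_lt hxy, ← card_filter_le_erase_add_one hx hxy]
    split_ifs <;> ring
  have hanti : ∀ x ∈ T, ∀ y ∈ T, g y x = -g x y := by
    intro x hx y hy
    rcases lt_trichotomy x y with hxy | rfl | hxy
    · exact hanti_lt x hx y hxy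
    · simp [g]
    · rw [hanti_lt y hy x hxy, neg_neg]
  have := calc ∑ x ∈ T, ∑ y ∈ T, g x y = ∑ y ∈ T, ∑ x ∈ T, g x y := sum_comm
    _ = -∑ x ∈ T, ∑ y ∈ T, g x y := by
      simp only [← sum_neg_distrib]
      exact sum_congr rfl fun y hy => sum_congr rfl fun x hx => hanti y hy x hx
  omega

end Incidence

section Rank

variable {𝔽 : Type*} [Field 𝔽] {n k : ℕ}

def bvecSpan (𝔽 : Type*) [Field 𝔽] (n k : ℕ) (X : Finset (Finset (Fin n))) :
    Submodule 𝔽 (Csets n (k - 1) → 𝔽) :=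
  Submodule.span 𝔽 ((fun F => bvec 𝔽 n k F) '' (X : Set (Finset (Fin n))))

lemma sum_inc_smul_bvec_erase (T : Finset (Fin n)) :
    ∑ x ∈ T, ((inc (T.erase x) T : ℤ) : 𝔽) • bvec 𝔽 n k (T.erase x) = 0 := by
  funext G
  simp only [Finset.sum_apply, Pi.smul_apply, smul_eq_mul, bvec, Pi.zero_apply]
  rw [← Int.cast_zero (R := 𝔽), ← sum_inc_erase_mul_inc T G.1]
  push_cast
  rfl

lemma bvec_mem_bvecSpan {X : Finset (Finset (Fin n))} {F : Finset (Fin n)} (hF : F ∈ X) :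
    bvec 𝔽 n k F ∈ bvecSpan 𝔽 n k X :=
  Submodule.subset_span ⟨F, hF, rfl⟩

lemma bvec_erase_mem_bvecSpan {T : Finset (Fin n)} {X : Finset (Finset (Fin n))} {a : Fin n}
    (ha : a ∈ T) (hX : ∀ x ∈ T, x ≠ a → T.erase x ∈ X) :
    bvec 𝔽 n k (T.erase a) ∈ bvecSpan 𝔽 n k X := by
  have hunit : ((inc (T.erase a) T : ℤ) : 𝔽) ≠ 0 := by simp [inc_erase_self ha]
  have h := sum_inc_smul_bvec_erase (𝔽 := 𝔽) (k := k) T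
  rw [← add_sum_erase T _ ha, add_eq_zero_iff_eq_neg] at h
  rw [← inv_smul_smul₀ hunit (bvec 𝔽 n k (T.erase a)), h]
  refine Submodule.smul_mem _ _ (neg_mem (Submodule.sum_mem _ fun x hx => ?_))
  exact Submodule.smul_mem _ _ (bvec_mem_bvecSpan (hX x (mem_of_mem_erase hx) (ne_of_mem_erase hx)))

lemma bvecSpan_mono {X Y : Finset (Finset (Fin n))} (h : X ⊆ Y) :
    bvecSpan 𝔽 n k X ≤ bvecSpan 𝔽 n k Y :=
  Submodule.span_mono (Set.image_mono (coe_subset.2 h))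

lemma bvecSpan_le {X Y : Finset (Finset (Fin n))} (h : ∀ F ∈ X, bvec 𝔽 n k F ∈ bvecSpan 𝔽 n k Y) :
    bvecSpan 𝔽 n k X ≤ bvecSpan 𝔽 n k Y :=
  Submodule.span_le.2 <| by rintro _ ⟨F, hF, rfl⟩; exact h F hF

lemma simRank_le_of_bvecSpan_le {X Y : Finset (Finset (Fin n))}
    (h : bvecSpan 𝔽 n k X ≤ bvecSpan 𝔽 n k Y) : simRank 𝔽 n k X ≤ simRank 𝔽 n k Y :=
  Submodule.finrank_mono h

lemma simRank_le_card (X : Finset (Finset (Fin n))) : simRank 𝔽 n k X ≤ #X := by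
  classical
  rw [simRank, ← coe_image]
  exact (finrank_span_finset_le_card _).trans card_image_le

lemma simRank_lt_of_notMem_bvecSpan {X Y : Finset (Finset (Fin n))} {F : Finset (Fin n)}
    (hXY : X ⊆ Y) (hF : F ∈ Y) (hnot : bvec 𝔽 n k F ∉ bvecSpan 𝔽 n k X) :
    simRank 𝔽 n k X < simRank 𝔽 n k Y :=
  Submodule.finrank_lt_finrank_of_lt (s := bvecSpan 𝔽 n k X) <|
    lt_of_le_of_ne (bvecSpan_mono hXY) fun h => hnot (h ▸ bvec_mem_bvecSpan hF)

end Rank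

section Coboundary

variable {𝔽 : Type*} [Field 𝔽] {n k : ℕ}

lemma mem_suppδ {S : Finset (Finset (Fin n))} {V F : Finset (Fin n)} :
    F ∈ suppδ 𝔽 S V ↔ F ∈ S ∧ inc V F ≠ 0 := by
  simp [suppδ, suppFin, cobdry, cast_inc_eq_zero_iff, and_comm]

lemma suppδ_eq_filter (S : Finset (Finset (Fin n))) (V : Finset (Fin n)) :
    suppδ 𝔽 S V = S.filter fun F => inc V F ≠ 0 := by
  ext F
  rw [mem_suppδ, mem_filter]

lemma suppδ_subset (S : Finset (Finset (Fin n))) (V : Finset (Fin n)) : suppδ 𝔽 S V ⊆ S :=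
  fun _ hF => (mem_suppδ.1 hF).1

/-- The `V`-coordinate vanishes on `S ∖ supp(δV)` but not on `supp(δV)`. -/
lemma bvec_notMem_bvecSpan_sdiff_suppδ {S : Finset (Finset (Fin n))} {V F : Finset (Fin n)}
    (hV : V.card = k - 1) (hF : F ∈ suppδ 𝔽 S V) :
    bvec 𝔽 n k F ∉ bvecSpan 𝔽 n k (S \ suppδ 𝔽 S V) := by
  let φ := LinearMap.proj (R := 𝔽) (φ := fun _ : Csets n (k - 1) => 𝔽) ⟨V, hV⟩
  have hker : bvecSpan 𝔽 n k (S \ suppδ 𝔽 S V) ≤ LinearMap.ker φ := by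
    refine Submodule.span_le.2 ?_
    rintro _ ⟨G, hG, rfl⟩
    obtain ⟨hGS, hGV⟩ := mem_sdiff.1 hG
    simpa [φ, bvec, cast_inc_eq_zero_iff, mem_suppδ, hGS] using hGV
  intro hmem
  exact (mem_suppδ.1 hF).2 (cast_inc_eq_zero_iff.1 (hker hmem))

lemma simRank_sdiff_suppδ_lt {S : Finset (Finset (Fin n))} {V F : Finset (Fin n)}
    (hV : V.card = k - 1) (hF : F ∈ suppδ 𝔽 S V) :
    simRank 𝔽 n k (S \ suppδ 𝔽 S V) < simRank 𝔽 n k S :=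
  simRank_lt_of_notMem_bvecSpan sdiff_subset (suppδ_subset S V hF)
    (bvec_notMem_bvecSpan_sdiff_suppδ hV hF)

theorem simCocircuit_suppδ {S : Finset (Finset (Fin n))} {V : Finset (Fin n)}
    (hV : V.card = k - 1) (h : simRank 𝔽 n k (S \ suppδ 𝔽 S V) + 1 = simRank 𝔽 n k S) :
    SimCocircuit 𝔽 n k S (suppδ 𝔽 S V) := by
  refine ⟨suppδ_subset S V, by omega, fun C' hC' => ?_⟩
  obtain ⟨F, hF, hFC'⟩ := exists_of_ssubset hC'
  have hFS := suppδ_subset S V hF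
  refine le_antisymm (simRank_le_of_bvecSpan_le (bvecSpan_mono sdiff_subset)) ?_
  calc simRank 𝔽 n k S
      ≤ simRank 𝔽 n k (insert F (S \ suppδ 𝔽 S V)) := by
        rw [← h]
        exact simRank_lt_of_notMem_bvecSpan (subset_insert _ _) (mem_insert_self _ _)
          (bvec_notMem_bvecSpan_sdiff_suppδ hV hF)
    _ ≤ simRank 𝔽 n k (S \ C') := by
        refine simRank_le_of_bvecSpan_le (bvecSpan_mono (insert_subset ?_ ?_))
        · exact mem_sdiff.2 ⟨hFS, hFC'⟩
        · exact sdiff_subset_sdiff subset_rfl hC'.subset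

end Coboundary

lemma eq_sub_of_forall_succ_lt {f : ℕ → ℕ} {r : ℕ} (hf : ∀ j < r, f (j + 1) < f j)
    (h0 : f 0 ≤ r) : ∀ j ≤ r, f j = r - j := by
  have hup : ∀ j ≤ r, f j + j ≤ r := by
    intro j
    induction j with
    | zero => simpa using h0
    | succ j ih => intro hj; have := hf j (by omega); have := ih (by omega); omega
  have hdown : ∀ m ≤ r, m ≤ f (r - m) := by
    intro m
    induction m with
    | zero => simp
    | succ m ih =>
      intro hm
      have := hf (r - (m + 1)) (by omega)
      rw [show r - (m + 1) + 1 = r - m by omega] at this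
      have := ih (by omega)
      omega
  intro j hj
  have := hup j hj
  have := hdown (r - j) (by omega)
  rw [Nat.sub_sub_self hj] at this
  omega

section BasicLinearSeq

variable {𝔽 : Type*} [Field 𝔽] {n k : ℕ}

lemma delSeq_eq_filter (S : Finset (Finset (Fin n))) (V : ℕ → Finset (Fin n)) (j : ℕ) :
    delSeq 𝔽 S V j = S.filter fun F => ∀ i < j, inc (V i) F = 0 := by
  induction j with
  | zero => simp [delSeq]
  | succ j ih =>
    ext F
    simp only [delSeq, ih, mem_sdiff, mem_filter, mem_suppδ, Nat.lt_succ_iff_lt_or_eq]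
    grind

lemma Cstar_eq_suppδ_delSeq (S : Finset (Finset (Fin n))) (V : ℕ → Finset (Fin n)) (j : ℕ) :
    Cstar 𝔽 S V j = suppδ 𝔽 (delSeq 𝔽 S V j) (V j) := by
  ext F
  simp only [Cstar, delSeq_eq_filter, mem_sdiff, mem_biUnion, mem_range, mem_suppδ, mem_filter]
  grind

/-- Each of the `r` deletions lowers the rank by exactly one. -/
theorem basicLinearSeq_of_simRank_le {S : Finset (Finset (Fin n))} {r : ℕ}
    {V : ℕ → Finset (Fin n)} (hV : ∀ j < r, (V j).card = k - 1)
    (hC : ∀ j < r, (Cstar 𝔽 S V j).Nonempty) (hr : simRank 𝔽 n k S ≤ r) :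
    BasicLinearSeq 𝔽 n k S r V := by
  set f := fun j => simRank 𝔽 n k (delSeq 𝔽 S V j)
  have hstep : ∀ j < r, f (j + 1) < f j := fun j hj => by
    obtain ⟨F, hF⟩ := hC j hj
    rw [Cstar_eq_suppδ_delSeq] at hF
    exact simRank_sdiff_suppδ_lt (hV j hj) hF
  have hf := eq_sub_of_forall_succ_lt hstep hr
  refine ⟨by simpa [f, delSeq] using hf 0 (Nat.zero_le r), hV, fun j hj => ?_⟩
  rw [Cstar_eq_suppδ_delSeq]
  have := hf (j + 1) hj
  have := hf j hj.le
  exact simCocircuit_suppδ (hV j hj) (by simp only [f, delSeq] at *; omega)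

end BasicLinearSeq

section Simplicial

variable {n k : ℕ}

instance (S : Finset (Finset (Fin n))) (F : Finset (Fin n)) : Decidable (IsFace k S F) :=
  decidable_of_iff (F.card < k ∨ ∀ G ∈ F.powersetCard k, G ∈ S) <| by
    simp only [IsFace, mem_powersetCard, and_imp]

/-- Every face strictly containing `V` lies in the star `V ∪ {x | V ∪ {x} ∈ S}`, so a star that
is a face is the unique facet above `V`. -/
theorem simplicialFace_of_isFace_star {S : Finset (Finset (Fin n))} {V : Finset (Fin n)}
    (hV : V.card + 1 = k) (hx : ∃ x ∉ V, insert x V ∈ S)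
    (hface : IsFace k S (V ∪ univ.filter fun x => insert x V ∈ S)) :
    SimplicialFace k S V := by
  set X := V ∪ univ.filter fun x => insert x V ∈ S
  have hsub : ∀ Y, IsFace k S Y → V ⊂ Y → Y ⊆ X := by
    intro Y hY hVY x hxY
    by_cases hxV : x ∈ V
    · exact mem_union_left _ hxV
    refine mem_union_right _ (mem_filter.2 ⟨mem_univ x, ?_⟩)
    have hcard := card_lt_card hVY
    refine hY.resolve_left (by omega) _ (insert_subset hxY hVY.subset) ?_
    rw [card_insert_of_notMem hxV, hV]
  have hVX : V ⊂ X := by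
    obtain ⟨x, hxV, hxS⟩ := hx
    exact ssubset_iff.2 ⟨x, hxV, insert_subset (mem_union_right _ (by simpa using hxS))
      subset_union_left⟩
  have hfacet : IsFacet k S X :=
    ⟨hface, fun G hG hXG => hXG.antisymm (hsub G hG (hVX.trans_subset hXG))⟩
  exact ⟨X, ⟨hfacet, hVX⟩, fun Y ⟨hY, hVY⟩ => hY.2 X hface (hsub Y hY.1 hVY)⟩

end Simplicial

section Example

variable {𝔽 : Type*} [Field 𝔽]

set_option maxRecDepth 100000 in
lemma simRank_exS3_le : simRank 𝔽 9 3 exS3 ≤ 10 := by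
  set B : Finset (Finset (Fin 9)) := exS3 \ {{1,3,4}, {2,5,6}, {2,7,8}}
  have hspan : ∀ F ∈ exS3, bvec 𝔽 9 3 F ∈ bvecSpan 𝔽 9 3 B := by
    intro F hF
    by_cases hB : F ∈ B
    · exact bvec_mem_bvecSpan hB
    have : F = ({0,1,3,4} : Finset (Fin 9)).erase 0 ∨ F = ({0,2,5,6} : Finset (Fin 9)).erase 0 ∨
        F = ({1,2,7,8} : Finset (Fin 9)).erase 1 := by
      revert F; decide
    rcases this with rfl | rfl | rfl <;> exact bvec_erase_mem_bvecSpan (by decide) (by decide)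
  calc simRank 𝔽 9 3 exS3 ≤ simRank 𝔽 9 3 B := simRank_le_of_bvecSpan_le (bvecSpan_le hspan)
    _ ≤ #B := simRank_le_card B
    _ = 10 := by decide

set_option maxRecDepth 100000 in
lemma exS3_Cstar_nonempty : ∀ j < 10, (Cstar 𝔽 exS3 exVseq j).Nonempty := by
  simp only [Cstar_eq_suppδ_delSeq, delSeq_eq_filter, suppδ_eq_filter]
  decide

set_option maxRecDepth 100000 in
lemma exS3_simplicialFace : ∀ j < 10, SimplicialFace 3 (delSeq 𝔽 exS3 exVseq j) (exVseq j) := by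
  intro j hj
  rw [delSeq_eq_filter]
  refine simplicialFace_of_isFace_star ?_ ?_ ?_ <;> revert j <;> decide

end Example

theorem stmt19 (𝔽 : Type*) [Field 𝔽] :
    simRank 𝔽 9 3 exS3 = 10 ∧ DPerfect 𝔽 9 3 exS3 ∧
      BasicLinearSeq 𝔽 9 3 exS3 10 exVseq ∧
      ∀ j < 10, SimplicialFace 3 (delSeq 𝔽 exS3 exVseq j) (exVseq j) := by
  have hbasic : BasicLinearSeq 𝔽 9 3 exS3 10 exVseq :=
    basicLinearSeq_of_simRank_le (by decide) exS3_Cstar_nonempty simRank_exS3_le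
  have hrank : simRank 𝔽 9 3 exS3 = 10 := hbasic.1
  have hsimplicial := exS3_simplicialFace (𝔽 := 𝔽)
  exact ⟨hrank, ⟨exVseq, hrank ▸ hbasic, hrank ▸ hsimplicial⟩, hbasic, hsimplicial⟩
end
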